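/- arXiv:1605.08161 — 9 statements merged into one kernel-verified Lean document; each statement's English description precedes it below -/
import Mathlib

section
/- For every negative real number x and integer d ≥ 2, the quantity f(x) := (x/(d-1)) · (Γ_d(x) − 1)/Γ_d(x) satisfies f(x) > 1, where Γ_d(x) := ∫_x^0 (t/x)^{d-1} e^{-t+x} dt. -/
/-!
Integrating by parts gives `Γ_d = 1 + ((d-1)/x) Γ_{d-1}`, so the quantity equals `Γ_{d-1}/Γ_d`.
This exceeds `1` because `0 < t/x < 1` on `(x, 0)`, so the integrand of `Γ_d` is pointwise
smaller than that of `Γ_{d-1}`.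
-/

open MeasureTheory intervalIntegral

/-- `Γ_d(x) = ∫_x^0 (t/x)^{d-1} e^{-t+x} dt`. -/
noncomputable def GammaFun (d : ℕ) (x : ℝ) : ℝ :=
  ∫ t in x..0, (t / x) ^ (d - 1) * Real.exp (-t + x)

lemma intervalIntegrable_GammaFun_integrand (n : ℕ) (x a b : ℝ) :
    IntervalIntegrable (fun t => (t / x) ^ n * Real.exp (-t + x)) volume a b :=
  Continuous.intervalIntegrable (by fun_prop) a b

lemma GammaFun_succ (n : ℕ) (x : ℝ) :
    GammaFun (n + 1) x = ∫ t in x..0, (t / x) ^ n * Real.exp (-t + x) :=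
  rfl

lemma div_mem_Ioo_of_mem_Ioo {α : Type*} [Field α] [LinearOrder α] [IsStrictOrderedRing α]
    {x t : α} (hx : x < 0) (ht : t ∈ Set.Ioo x 0) : t / x ∈ Set.Ioo 0 1 :=
  ⟨div_pos_of_neg_of_neg ht.2 hx, (div_lt_one_of_neg hx).2 ht.1⟩

section

variable {x : ℝ}

lemma GammaFun_pos (d : ℕ) (hx : x < 0) : 0 < GammaFun d x :=
  intervalIntegral_pos_of_pos_on (intervalIntegrable_GammaFun_integrand _ x x 0)
    (fun _ ht => mul_pos (pow_pos (div_mem_Ioo_of_mem_Ioo hx ht).1 _) (Real.exp_pos _)) hx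

lemma GammaFun_succ_succ_lt (n : ℕ) (hx : x < 0) :
    GammaFun (n + 2) x < GammaFun (n + 1) x := by
  rw [← sub_pos, GammaFun, GammaFun, ← integral_sub
    (intervalIntegrable_GammaFun_integrand _ x x 0) (intervalIntegrable_GammaFun_integrand _ x x 0)]
  refine intervalIntegral_pos_of_pos_on
    ((intervalIntegrable_GammaFun_integrand _ x x 0).sub
      (intervalIntegrable_GammaFun_integrand _ x x 0)) (fun t ht => ?_) hx
  obtain ⟨h0, h1⟩ := div_mem_Ioo_of_mem_Ioo hx ht
  rw [← sub_mul]
  exact mul_pos (sub_pos.2 (pow_lt_pow_right_of_lt_one₀ h0 h1 (Nat.lt_succ_self n)))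
    (Real.exp_pos _)

lemma GammaFun_succ_succ (n : ℕ) (hx : x ≠ 0) :
    GammaFun (n + 2) x = 1 + (n + 1) / x * GammaFun (n + 1) x := by
  have hu : ∀ t ∈ Set.uIcc x 0, HasDerivAt (fun t => (t / x) ^ (n + 1))
      ((n + 1) / x * (t / x) ^ n) t := fun t _ => by
    refine (((hasDerivAt_id' t).div_const x).fun_pow (n + 1)).congr_deriv ?_
    push_cast
    ring
  have hv : ∀ t ∈ Set.uIcc x 0, HasDerivAt (fun t => -Real.exp (-t + x)) (Real.exp (-t + x)) t :=
    fun t _ => by simpa using (((hasDerivAt_id' t).fun_neg.add_const x).exp).fun_neg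
  have hu' : IntervalIntegrable (fun t => (n + 1) / x * (t / x) ^ n) volume x 0 :=
    Continuous.intervalIntegrable (by fun_prop) x 0
  have hv' : IntervalIntegrable (fun t => Real.exp (-t + x)) volume x 0 :=
    Continuous.intervalIntegrable (by fun_prop) x 0
  rw [GammaFun_succ, integral_mul_deriv_eq_deriv_mul hu hv hu' hv', GammaFun_succ,
    ← intervalIntegral.integral_const_mul]
  simp [div_self hx, mul_assoc]

end

theorem gamma_quotient_gt_one (d : ℕ) (hd : 2 ≤ d) (x : ℝ) (hx : x < 0) :
    x / ((d : ℝ) - 1) * ((GammaFun d x - 1) / GammaFun d x) > 1 := by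
  obtain ⟨n, rfl⟩ : ∃ n, d = n + 2 := ⟨d - 2, by omega⟩
  have hquot : x / ((n + 2 : ℕ) - 1 : ℝ) * ((GammaFun (n + 2) x - 1) / GammaFun (n + 2) x)
      = GammaFun (n + 1) x / GammaFun (n + 2) x := by
    have hsub : GammaFun (n + 2) x - 1 = (n + 1) / x * GammaFun (n + 1) x := by
      rw [GammaFun_succ_succ n hx.ne, add_sub_cancel_left]
    have hcast : ((n + 2 : ℕ) : ℝ) - 1 = n + 1 := by push_cast; ring
    have hΓ := (GammaFun_pos (n + 2) hx).ne'
    have hx0 := hx.ne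
    rw [hcast, hsub]
    field_simp
  rw [hquot, gt_iff_lt, one_lt_div (GammaFun_pos _ hx)]
  exact GammaFun_succ_succ_lt n hx
end

section
/- Let d ≥ 2, R > 0, α < 0, and let μ = (d−2)/2. If k is the smallest positive root of the equation k·I_{μ+1}(kR) + α·I_μ(kR) = 0 (where I_ν denotes the modified Bessel function of the first kind), then for every r ∈ (0,R) one has k·r·I_{μ+1}(kr) + α·R·I_μ(kr) < 0. -/
/-!
Write `I_ν(x) = (x/2)^ν F_ν((x/2)^2)` with the entire series `F_ν(t) = ∑ t^m / (m! Γ(m+ν+1))`.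
Then `y I_{μ+1}(yR) + α I_μ(yR) = (yR/2)^μ g(y)`, where
`g(y) = y (yR/2) F_{μ+1}((yR/2)^2) + α F_μ((yR/2)^2)` is continuous on all of `ℝ` and
`g(0) = α / Γ(μ+1) < 0`. Since `k` is the first positive zero, `g` has no zero on `(0, k)`, so by
the intermediate value theorem `g < 0` on `[0, k)`. Finally
`k r I_{μ+1}(kr) + α R I_μ(kr) = R (kr/2)^μ g(kr/R)` with `kr/R ∈ (0, k)`.
-/

/-- The modified Bessel function of the first kind `I_ν`, defined by its power series
`I_ν(x) = ∑_{m≥0} (x/2)^{2m+ν} / (m! Γ(m+ν+1))` (for `x > 0`, real order `ν`). -/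
noncomputable def besselI (ν x : ℝ) : ℝ :=
  ∑' m : ℕ, (x / 2) ^ (2 * (m : ℝ) + ν) / ((Nat.factorial m : ℝ) * Real.Gamma ((m : ℝ) + ν + 1))

open Real Set Nat

noncomputable def besselF (ν t : ℝ) : ℝ :=
  ∑' m : ℕ, t ^ m / ((m ! : ℝ) * Gamma (m + ν + 1))

lemma factorial_mul_Gamma_le_Gamma_nat_add {ν : ℝ} (hν : 0 ≤ ν) (m : ℕ) :
    (m ! : ℝ) * Gamma (ν + 1) ≤ Gamma (m + ν + 1) := by
  induction m with
  | zero => simp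
  | succ m ih =>
    have hm : 0 < (m : ℝ) + ν + 1 := by positivity
    rw [Nat.factorial_succ, Nat.cast_mul, Nat.cast_succ,
      show ((m : ℝ) + 1) + ν + 1 = (m + ν + 1) + 1 by ring, Gamma_add_one hm.ne', mul_assoc]
    exact mul_le_mul (by linarith) ih (by positivity) hm.le

lemma abs_besselF_term_le {ν : ℝ} (hν : 0 ≤ ν) (m : ℕ) {t T : ℝ} (ht : |t| ≤ T) :
    |t ^ m / ((m ! : ℝ) * Gamma (m + ν + 1))| ≤ T ^ m / m ! * (Gamma (ν + 1))⁻¹ := by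
  have hΓ : 0 < Gamma (ν + 1) := Gamma_pos_of_pos (by linarith)
  have hfac : (1 : ℝ) ≤ m ! := by exact_mod_cast Nat.one_le_iff_ne_zero.2 m.factorial_ne_zero
  have hT : 0 ≤ T := (abs_nonneg t).trans ht
  have hΓm : 0 < Gamma (m + ν + 1) := Gamma_pos_of_pos (by positivity)
  rw [abs_div, abs_pow, abs_of_pos (mul_pos (by positivity) hΓm), ← div_eq_mul_inv, div_div]
  refine div_le_div₀ (by positivity) (pow_le_pow_left₀ (abs_nonneg t) ht m) (by positivity) ?_
  calc (m ! : ℝ) * Gamma (ν + 1) ≤ Gamma (m + ν + 1) := factorial_mul_Gamma_le_Gamma_nat_add hν m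
    _ ≤ m ! * Gamma (m + ν + 1) :=
      le_mul_of_one_le_left hΓm.le hfac

lemma continuous_besselF {ν : ℝ} (hν : 0 ≤ ν) : Continuous (besselF ν) := by
  refine continuous_iff_continuousAt.2 fun t => ?_
  have hon : ContinuousOn (besselF ν) (Icc (-(|t| + 1)) (|t| + 1)) :=
    continuousOn_tsum (fun m => (continuous_pow m).div_const _ |>.continuousOn)
      ((summable_pow_div_factorial _).mul_right _)
      (fun m s hs => abs_besselF_term_le hν m (abs_le.2 hs))
  exact hon.continuousAt (Icc_mem_nhds (by linarith [neg_abs_le t]) (by linarith [le_abs_self t]))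

lemma besselF_zero (ν : ℝ) : besselF ν 0 = (Gamma (ν + 1))⁻¹ := by
  rw [besselF, tsum_eq_single 0 fun m hm => by simp [zero_pow hm]]
  simp

lemma besselI_eq_rpow_mul_besselF (ν : ℝ) {x : ℝ} (hx : 0 < x) :
    besselI ν x = (x / 2) ^ ν * besselF ν ((x / 2) ^ 2) := by
  rw [besselI, besselF, ← tsum_mul_left]
  refine tsum_congr fun m => ?_
  rw [rpow_add (by positivity), show 2 * (m : ℝ) = ((2 * m : ℕ) : ℝ) by push_cast; ring,
    rpow_natCast, pow_mul]
  ring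

lemma besselI_add_one_eq_rpow_mul_besselF (ν : ℝ) {x : ℝ} (hx : 0 < x) :
    besselI (ν + 1) x = (x / 2) ^ ν * (x / 2 * besselF (ν + 1) ((x / 2) ^ 2)) := by
  rw [besselI_eq_rpow_mul_besselF _ hx, rpow_add_one (by positivity)]
  ring

lemma neg_on_Ico_of_ne_zero {g : ℝ → ℝ} {a b : ℝ} (hg : ContinuousOn g (Ico a b))
    (ha : g a < 0) (hne : ∀ y ∈ Ioo a b, g y ≠ 0) : ∀ y ∈ Ico a b, g y < 0 := by
  intro y hy
  by_contra! hgy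
  have hab : a ∈ Ico a b := ⟨le_rfl, hy.1.trans_lt hy.2⟩
  obtain ⟨z, hz, hgz⟩ := isPreconnected_Ico.intermediate_value hab hy hg ⟨ha.le, hgy⟩
  have hza : z ≠ a := by rintro rfl; exact ha.ne hgz
  exact hne z ⟨lt_of_le_of_ne hz.1 hza.symm, hz.2⟩ hgz

theorem bessel_combination_neg_general (d : ℕ) (hd : 2 ≤ d) (R α k : ℝ) (hR : 0 < R) (hα : α < 0)
    (μ : ℝ) (hμ : μ = ((d : ℝ) - 2) / 2)
    (hk : 0 < k)
    (hmin : ∀ k', 0 < k' → k' < k → k' * besselI (μ + 1) (k' * R) + α * besselI μ (k' * R) ≠ 0) :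
    ∀ r ∈ Set.Ioo (0 : ℝ) R, k * r * besselI (μ + 1) (k * r) + α * R * besselI μ (k * r) < 0 := by
  have hμ0 : 0 ≤ μ := by
    have : (2 : ℝ) ≤ d := by exact_mod_cast hd
    rw [hμ]; linarith
  set g : ℝ → ℝ := fun y =>
    y * (y * R / 2) * besselF (μ + 1) ((y * R / 2) ^ 2) + α * besselF μ ((y * R / 2) ^ 2)
  have hcomb : ∀ y > 0,
      y * besselI (μ + 1) (y * R) + α * besselI μ (y * R) = (y * R / 2) ^ μ * g y := by
    intro y hy
    rw [besselI_add_one_eq_rpow_mul_besselF μ (by positivity),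
      besselI_eq_rpow_mul_besselF μ (by positivity)]
    ring
  have hg : ∀ y ∈ Ico 0 k, g y < 0 := by
    have hF₀ := continuous_besselF hμ0
    have hF₁ := continuous_besselF (by linarith : 0 ≤ μ + 1)
    refine neg_on_Ico_of_ne_zero (by fun_prop) ?_ fun y hy hgy => ?_
    · simpa [g, besselF_zero] using mul_neg_of_neg_of_pos hα (inv_pos.2 (Gamma_pos_of_pos (by linarith : 0 < μ + 1)))
    · exact hmin y hy.1 hy.2 (by rw [hcomb y hy.1, hgy, mul_zero])
  rintro r ⟨hr0, hrR⟩
  have hy : 0 < k * r / R := by positivity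
  have hyk : k * r / R < k := (div_lt_iff₀ hR).2 (by nlinarith)
  calc k * r * besselI (μ + 1) (k * r) + α * R * besselI μ (k * r)
      = R * (k * r / R * besselI (μ + 1) (k * r / R * R) + α * besselI μ (k * r / R * R)) := by
        rw [div_mul_cancel₀ _ hR.ne']; field_simp
    _ = R * ((k * r / R * R / 2) ^ μ * g (k * r / R)) := by rw [hcomb _ hy]
    _ < 0 := mul_neg_of_pos_of_neg hR (mul_neg_of_pos_of_neg (by positivity) (hg _ ⟨hy.le, hyk⟩))

theorem bessel_combination_neg (d : ℕ) (hd : 2 ≤ d) (R α k : ℝ) (hR : 0 < R) (hα : α < 0)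
    (μ : ℝ) (hμ : μ = ((d : ℝ) - 2) / 2)
    (hk : 0 < k) (hroot : k * besselI (μ + 1) (k * R) + α * besselI μ (k * R) = 0)
    (hmin : ∀ k', 0 < k' → k' < k → k' * besselI (μ + 1) (k' * R) + α * besselI μ (k' * R) ≠ 0) :
    ∀ r ∈ Set.Ioo (0 : ℝ) R, k * r * besselI (μ + 1) (k * r) + α * R * besselI μ (k * r) < 0 :=
  bessel_combination_neg_general d hd R α k hR hα μ hμ hk hmin
end

section
/- For μ > 0 and z > 0, the ratio of modified Bessel functions satisfies I_{μ+1}(z)/I_μ(z) > z / ((μ + 1/2) + sqrt(z² + (μ + 3/2)²)). -/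
open Real Polynomial Finset Filter
open scoped Nat

noncomputable section

def besselCoeff (ν : ℝ) (m : ℕ) : ℝ := ((m ! : ℝ) * Gamma (m + ν + 1))⁻¹

def besselSeries (ν t : ℝ) : ℝ := ∑' m : ℕ, t ^ m * besselCoeff ν m

def besselProdCoeff (α β : ℝ) (k : ℕ) : ℝ :=
  (descPochhammer ℝ k).eval (α + β + 2 * k) / ((k ! : ℝ) * Gamma (k + α + 1) * Gamma (k + β + 1))

end

theorem descPochhammer_eval_add {R : Type*} [CommRing R] (x y : R) (k : ℕ) :
    (descPochhammer R k).eval (x + y) = ∑ p ∈ antidiagonal k,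
      k.choose p.1 * ((descPochhammer R p.1).eval x * (descPochhammer R p.2).eval y) := by
  simp only [← descPochhammer_map (Int.castRingHom R), eval_map, ← algebraMap_int_eq,
    ← aeval_def, aeval_eq_smeval]
  exact Ring.descPochhammer_smeval_add k (Commute.all x y)

theorem Real.Gamma_add_natCast {y : ℝ} (hy : 0 < y) (n : ℕ) :
    Gamma (y + n) = (ascPochhammer ℝ n).eval y * Gamma y := by
  induction n with
  | zero => simp
  | succ n ih =>
    rw [Nat.cast_succ, ← add_assoc, Gamma_add_one (by positivity), ih, ascPochhammer_succ_eval]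
    ring

section Coefficients

variable {ν : ℝ}

theorem natCast_add_add_one_pos (hν : -1 < ν) (m : ℕ) : 0 < (m : ℝ) + ν + 1 := by
  linarith [(Nat.cast_nonneg m : (0 : ℝ) ≤ m)]

theorem besselCoeff_pos (hν : -1 < ν) (m : ℕ) : 0 < besselCoeff ν m := by
  have := Gamma_pos_of_pos (natCast_add_add_one_pos hν m)
  unfold besselCoeff
  positivity

theorem besselCoeff_succ (hν : -1 < ν) (m : ℕ) :
    besselCoeff ν (m + 1) = besselCoeff ν m / ((m + 1) * (m + ν + 1)) := by
  have := Gamma_pos_of_pos (natCast_add_add_one_pos hν m)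
  rw [besselCoeff, besselCoeff, Nat.factorial_succ, Nat.cast_mul, Nat.cast_succ,
    show (m : ℝ) + 1 + ν + 1 = (m + ν + 1) + 1 by ring,
    Gamma_add_one (natCast_add_add_one_pos hν m).ne']
  field_simp

theorem besselCoeff_zero_eq (hν : -1 < ν) : besselCoeff ν 0 = (ν + 1) * besselCoeff (ν + 1) 0 := by
  simp only [besselCoeff, Nat.factorial_zero, Nat.cast_one, Nat.cast_zero, one_mul, zero_add,
    Gamma_add_one (show ν + 1 ≠ 0 by linarith)]
  field_simp [show ν + 1 ≠ 0 by linarith]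

theorem besselCoeff_succ_eq_add (hν : -1 < ν) (m : ℕ) :
    besselCoeff ν (m + 1) = besselCoeff (ν + 2) m + (ν + 1) * besselCoeff (ν + 1) (m + 1) := by
  have hm := natCast_add_add_one_pos (show -1 < ν + 1 by linarith) m
  have hΓ := Gamma_pos_of_pos hm
  simp only [besselCoeff, Nat.factorial_succ, Nat.cast_mul, Nat.cast_succ]
  rw [show (m : ℝ) + 1 + ν + 1 = m + (ν + 1) + 1 by ring,
    show (m : ℝ) + (ν + 2) + 1 = (m + (ν + 1) + 1) + 1 by ring,
    show (m : ℝ) + 1 + (ν + 1) + 1 = (m + (ν + 1) + 1) + 1 by ring, Gamma_add_one hm.ne']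
  field_simp
  ring

theorem summable_besselCoeff (hν : -1 < ν) (t : ℝ) :
    Summable fun m : ℕ => t ^ m * besselCoeff ν m := by
  refine summable_of_ratio_norm_eventually_le (r := 1 / 2) (by norm_num) ?_
  filter_upwards [eventually_ge_atTop ⌈2 * |t|⌉₊] with m hm
  have hm : 2 * |t| ≤ m := Nat.ceil_le.mp hm
  have hD : 2 * |t| < (m + 1) * (m + ν + 1) := by nlinarith
  have hD₀ : 0 < (m + 1) * (m + ν + 1) := by linarith [abs_nonneg t]
  rw [besselCoeff_succ hν, pow_succ,
    show t ^ m * t * (besselCoeff ν m / ((m + 1) * (m + ν + 1)))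
      = t / ((m + 1) * (m + ν + 1)) * (t ^ m * besselCoeff ν m) by ring, norm_mul]
  gcongr
  rw [norm_div, norm_of_nonneg hD₀.le, div_le_iff₀ hD₀, Real.norm_eq_abs]
  linarith

theorem summable_norm_besselCoeff (hν : -1 < ν) (t : ℝ) :
    Summable fun m : ℕ => ‖t ^ m * besselCoeff ν m‖ := by
  refine (summable_besselCoeff hν |t|).congr fun m => ?_
  rw [norm_mul, norm_pow, Real.norm_eq_abs, norm_of_nonneg (besselCoeff_pos hν m).le]

end Coefficients

section Series

variable {ν : ℝ}

theorem besselSeries_pos (hν : -1 < ν) {t : ℝ} (ht : 0 ≤ t) : 0 < besselSeries ν t :=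
  (summable_besselCoeff hν t).tsum_pos
    (fun m => mul_nonneg (pow_nonneg ht m) (besselCoeff_pos hν m).le) 0
    (by simpa using besselCoeff_pos hν 0)

theorem besselI_eq_rpow_mul_besselSeries (ν : ℝ) {z : ℝ} (hz : 0 < z) :
    besselI ν z = (z / 2) ^ ν * besselSeries ν ((z / 2) ^ 2) := by
  rw [besselI, besselSeries, ← tsum_mul_left]
  congr 1 with m
  rw [rpow_add (by positivity), rpow_mul (by positivity), besselCoeff]
  norm_cast
  ring

theorem besselSeries_eq_add (hν : -1 < ν) (t : ℝ) :
    besselSeries ν t = t * besselSeries (ν + 2) t + (ν + 1) * besselSeries (ν + 1) t := by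
  let f : ℕ → ℝ := fun m => t ^ m * besselCoeff ν m - (ν + 1) * (t ^ m * besselCoeff (ν + 1) m)
  have h₁ : HasSum f (besselSeries ν t - (ν + 1) * besselSeries (ν + 1) t) :=
    (summable_besselCoeff hν t).hasSum.sub
      ((summable_besselCoeff (ν := ν + 1) (by linarith) t).hasSum.mul_left (ν + 1))
  have h₂ : HasSum f (t * besselSeries (ν + 2) t) := by
    refine (hasSum_nat_add_iff' 1).mp ?_
    have h₀ : f 0 = 0 := by simp [f, besselCoeff_zero_eq hν]
    rw [sum_range_one, h₀, sub_zero]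
    refine ((summable_besselCoeff (ν := ν + 2) (by linarith) t).hasSum.mul_left t).congr_fun
      fun m => ?_
    simp only [f, besselCoeff_succ_eq_add hν]
    ring
  linarith [h₁.unique h₂]

end Series

section Product

variable {α β : ℝ}

theorem besselCoeff_mul_besselCoeff (hα : -1 < α) (hβ : -1 < β) {i j k : ℕ} (h : i + j = k) :
    besselCoeff α i * besselCoeff β j = k.choose i *
      ((descPochhammer ℝ i).eval (k + β) * (descPochhammer ℝ j).eval (k + α)) /
        ((k ! : ℝ) * Gamma (k + α + 1) * Gamma (k + β + 1)) := by
  have hk : (k : ℝ) = i + j := by exact_mod_cast h.symm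
  have hΓα : Gamma (k + α + 1) = (descPochhammer ℝ j).eval (k + α) * Gamma (i + α + 1) := by
    rw [descPochhammer_eval_eq_ascPochhammer,
      show (k : ℝ) + α - j + 1 = i + α + 1 by rw [hk]; ring,
      ← Gamma_add_natCast (natCast_add_add_one_pos hα i), hk]
    congr 1
    ring
  have hΓβ : Gamma (k + β + 1) = (descPochhammer ℝ i).eval (k + β) * Gamma (j + β + 1) := by
    rw [descPochhammer_eval_eq_ascPochhammer,
      show (k : ℝ) + β - i + 1 = j + β + 1 by rw [hk]; ring,
      ← Gamma_add_natCast (natCast_add_add_one_pos hβ j), hk]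
    congr 1
    ring
  have hchoose : (k.choose i : ℝ) * i ! * j ! = k ! := by
    rw [← h, Nat.choose_symm_add]
    exact_mod_cast Nat.add_choose_mul_factorial_mul_factorial i j
  have hDα : 0 < (descPochhammer ℝ j).eval (k + α) := descPochhammer_pos (by rw [hk]; linarith)
  have hDβ : 0 < (descPochhammer ℝ i).eval (k + β) := descPochhammer_pos (by rw [hk]; linarith)
  have := Gamma_pos_of_pos (natCast_add_add_one_pos hα i)
  have := Gamma_pos_of_pos (natCast_add_add_one_pos hβ j)
  have : (0 : ℝ) < k.choose i := by exact_mod_cast Nat.choose_pos (by omega)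
  rw [besselCoeff, besselCoeff, hΓα, hΓβ, ← hchoose]
  field_simp

theorem sum_antidiagonal_besselCoeff_mul (hα : -1 < α) (hβ : -1 < β) (k : ℕ) :
    ∑ p ∈ antidiagonal k, besselCoeff α p.1 * besselCoeff β p.2 = besselProdCoeff α β k := by
  rw [sum_congr rfl fun p hp => besselCoeff_mul_besselCoeff hα hβ (mem_antidiagonal.mp hp),
    ← sum_div, besselProdCoeff, show α + β + 2 * (k : ℝ) = (k + β) + (k + α) by ring,
    descPochhammer_eval_add]

theorem hasSum_besselSeries_mul (hα : -1 < α) (hβ : -1 < β) (t : ℝ) :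
    HasSum (fun k => t ^ k * besselProdCoeff α β k) (besselSeries α t * besselSeries β t) := by
  have hf := summable_norm_besselCoeff hα t
  have hg := summable_norm_besselCoeff hβ t
  rw [besselSeries, besselSeries, tsum_mul_tsum_eq_tsum_sum_antidiagonal_of_summable_norm hf hg]
  refine (summable_norm_sum_mul_antidiagonal_of_summable_norm hf hg).of_norm.hasSum.congr_fun
    fun k => ?_
  rw [← sum_antidiagonal_besselCoeff_mul hα hβ, mul_sum]
  refine sum_congr rfl fun p hp => ?_
  rw [← mem_antidiagonal.mp hp, pow_add]
  ring

theorem besselProdCoeff_pos (hα : -1 < α) (hβ : -1 < β) (k : ℕ) :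
    0 < besselProdCoeff α β k := by
  rw [← sum_antidiagonal_besselCoeff_mul hα hβ]
  exact sum_pos (fun p _ => mul_pos (besselCoeff_pos hα _) (besselCoeff_pos hβ _))
    ⟨(0, k), by simp⟩

end Product

section Turan

variable {ν : ℝ}

theorem besselProdCoeff_zero_sub (hν : -1 < ν) :
    besselProdCoeff ν ν 0 - (ν + 1 / 2) * besselProdCoeff ν (ν + 1) 0
      = besselProdCoeff ν ν 0 / (2 * (ν + 1)) := by
  have hν₁ : 0 < ν + 1 := by linarith
  have := Gamma_pos_of_pos hν₁
  simp only [besselProdCoeff, descPochhammer_zero, eval_one, Nat.factorial_zero, Nat.cast_zero,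
    Nat.cast_one, zero_add, one_mul, Gamma_add_one hν₁.ne']
  field_simp
  ring

theorem besselProdCoeff_succ_sub (hν : -1 < ν) (m : ℕ) :
    besselProdCoeff ν ν (m + 1) - (ν + 1 / 2) * besselProdCoeff ν (ν + 1) (m + 1)
      - besselProdCoeff (ν + 1) (ν + 1) m
      = (ν + 1 / 2) * besselProdCoeff (ν + 1) (ν + 1) m / ((m + 1) * (m + ν + 2)) := by
  have hm := natCast_add_add_one_pos (show -1 < ν + 1 by linarith) m
  have : (m : ℝ) + ν + 2 ≠ 0 := by linarith
  have := Gamma_pos_of_pos hm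
  simp only [besselProdCoeff, Nat.factorial_succ, Nat.cast_mul, Nat.cast_succ]
  rw [show ν + ν + 2 * ((m : ℝ) + 1) = 2 * ν + 2 * m + 2 by ring, descPochhammer_succ_eval,
    show ν + (ν + 1) + 2 * ((m : ℝ) + 1) = (2 * ν + 2 * m + 2) + 1 by ring,
    descPochhammer_succ_left, eval_mul, eval_X, eval_comp, eval_sub, eval_X, eval_one,
    add_sub_cancel_right, show ν + 1 + (ν + 1) + 2 * (m : ℝ) = 2 * ν + 2 * m + 2 by ring,
    show (m : ℝ) + 1 + ν + 1 = m + (ν + 1) + 1 by ring,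
    show (m : ℝ) + 1 + (ν + 1) + 1 = (m + (ν + 1) + 1) + 1 by ring, Gamma_add_one hm.ne']
  field_simp
  ring

theorem besselSeries_sq_gt (hν : -1 / 2 < ν) {t : ℝ} (ht : 0 ≤ t) :
    (ν + 1 / 2) * (besselSeries ν t * besselSeries (ν + 1) t) + t * besselSeries (ν + 1) t ^ 2
      < besselSeries ν t ^ 2 := by
  have hν₀ : -1 < ν := by linarith
  have hν₁ : -1 < ν + 1 := by linarith
  let g : ℕ → ℝ := fun k =>
    t ^ k * besselProdCoeff ν ν k - (ν + 1 / 2) * (t ^ k * besselProdCoeff ν (ν + 1) k)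
  have hg : HasSum g
      (besselSeries ν t ^ 2 - (ν + 1 / 2) * (besselSeries ν t * besselSeries (ν + 1) t)) := by
    rw [sq]
    exact (hasSum_besselSeries_mul hν₀ hν₀ t).sub
      ((hasSum_besselSeries_mul hν₀ hν₁ t).mul_left _)
  have htail := ((hasSum_nat_add_iff' 1).mpr hg).sub
    ((hasSum_besselSeries_mul hν₁ hν₁ t).mul_left t)
  have hg₀ : 0 < g 0 := by
    simp only [g, pow_zero, one_mul, besselProdCoeff_zero_sub hν₀]
    have := besselProdCoeff_pos hν₀ hν₀ 0
    have : 0 < 2 * (ν + 1) := by linarith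
    positivity
  have htail_nonneg := htail.nonneg fun m => by
    have : g (m + 1) - t * (t ^ m * besselProdCoeff (ν + 1) (ν + 1) m)
        = t ^ (m + 1) * (besselProdCoeff ν ν (m + 1)
          - (ν + 1 / 2) * besselProdCoeff ν (ν + 1) (m + 1)
          - besselProdCoeff (ν + 1) (ν + 1) m) := by
      simp only [g]
      ring
    rw [this, besselProdCoeff_succ_sub hν₀]
    have := besselProdCoeff_pos hν₁ hν₁ m
    have : 0 < (m : ℝ) + ν + 2 := by linarith [natCast_add_add_one_pos hν₀ m]
    have : 0 < ν + 1 / 2 := by linarith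
    positivity
  simp only [sum_range_one, sq] at htail_nonneg
  nlinarith

end Turan

theorem two_mul_lt_sqrt_sub_mul_of_mul_add_lt_sq {a t x y : ℝ} (ht : 0 < t) (hx : 0 < x)
    (hy : 0 < y) (h : a * (x * y) + t * y ^ 2 < x ^ 2) :
    2 * t * y < (√(4 * t + a ^ 2) - a) * x := by
  set s := √(4 * t + a ^ 2)
  have hs : s ^ 2 = 4 * t + a ^ 2 := sq_sqrt (by positivity)
  have has : a < s := lt_sqrt_of_sq_lt (by linarith)
  -- `x / y` lies above the positive root `(a + s) / 2` of `X² - a X - t`.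
  have hfactor : 0 < (x - (a + s) / 2 * y) * (x - (a - s) / 2 * y) := by
    linear_combination h + y ^ 2 / 4 * hs
  have hroot : 0 < x - (a + s) / 2 * y :=
    pos_of_mul_pos_left hfactor (by nlinarith)
  nlinarith [mul_pos (sub_pos.2 has) hroot]

/-- Amos' lower bound (with Segura's strict inequality) for the Bessel quotient
`I_{μ+1}(z)/I_μ(z)`. -/
theorem besselI_ratio_lower_bound (μ z : ℝ) (hμ : 0 < μ) (hz : 0 < z) :
    besselI (μ + 1) z / besselI μ z >
      z / ((μ + 1 / 2) + Real.sqrt (z ^ 2 + (μ + 3 / 2) ^ 2)) := by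
  set t := (z / 2) ^ 2
  have ht : 0 < t := by positivity
  have hF₀ := besselSeries_pos (ν := μ) (by linarith) ht.le
  have hF₁ := besselSeries_pos (ν := μ + 1) (by linarith) ht.le
  have hF₂ := besselSeries_pos (ν := μ + 2) (by linarith) ht.le
  have hrec := besselSeries_eq_add (ν := μ) (by linarith) t
  have hturan := besselSeries_sq_gt (ν := μ + 1) (by linarith) ht.le
  rw [show μ + 1 + 1 / 2 = μ + 3 / 2 by ring, show μ + 1 + 1 = μ + 2 by ring] at hturan
  have hroot := two_mul_lt_sqrt_sub_mul_of_mul_add_lt_sq ht hF₁ hF₂ hturan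
  rw [show 4 * t = z ^ 2 by ring] at hroot
  have hcore : 2 * besselSeries μ t
      < besselSeries (μ + 1) t * (μ + 1 / 2 + √(z ^ 2 + (μ + 3 / 2) ^ 2)) := by
    rw [hrec]
    linarith
  have hD : 0 < μ + 1 / 2 + √(z ^ 2 + (μ + 3 / 2) ^ 2) := by positivity
  rw [besselI_eq_rpow_mul_besselSeries _ hz, besselI_eq_rpow_mul_besselSeries _ hz,
    rpow_add_one (by positivity), mul_assoc, mul_div_mul_left _ _ (by positivity), gt_iff_lt,
    div_lt_div_iff₀ hD hF₀]
  nlinarith [mul_lt_mul_of_pos_left hcore hz]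
end

section
/- Let d ≥ 2, R > 0, α < 0, and let λ₁^α(B_R) denote the first Robin eigenvalue of the ball B_R ⊂ ℝ^d with boundary parameter α. Then λ₁^α(B_R) < −α² + ((d−1)/R)·α. -/
/-!
The test function `φ(r) = e^{α(R-r)}` has `φ' = -αφ` and `φ(R) = 1`, so its Rayleigh quotient is
`α² + α R^{d-1} / D` with `D = ∫₀^R e^{2α(R-r)} r^{d-1} dr`, and integrating the derivative of
`e^{2α(R-r)} r^{d-1}` gives `((d-1)/R - 2α) D < R^{d-1}`, which is the claimed bound.

The infimum is only meaningful (`sInf` of a set that is not bounded below is `0`) because the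
quotients are bounded below: integrating `(φ² r^d)'` and using `2uvr ≤ cv² + u²r²/c` gives the trace
inequality `R^d φ(R)² ≤ c ∫ φ'² r^{d-1} + (R²/c + d) ∫ φ² r^{d-1}`, and `c = R/(-α)` turns it into
the lower bound `-α² + dα/R` for every quotient.
-/

open MeasureTheory intervalIntegral

/-- The first Robin eigenvalue of the ball `B_R ⊂ ℝ^d`, given by the radial
Rayleigh quotient
`(∫₀^R φ'(r)² r^{d-1} dr + α R^{d-1} φ(R)²) / ∫₀^R φ(r)² r^{d-1} dr`
over nonzero `C¹` functions `φ` on `[0,R]`. -/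
noncomputable def lam1Ball (d : ℕ) (R α : ℝ) : ℝ :=
  sInf { q : ℝ | ∃ φ : ℝ → ℝ, ContDiff ℝ 1 φ ∧
    (∫ r in (0 : ℝ)..R, (φ r) ^ 2 * r ^ (d - 1)) ≠ 0 ∧
    q = ((∫ r in (0 : ℝ)..R, (deriv φ r) ^ 2 * r ^ (d - 1)) + α * R ^ (d - 1) * (φ R) ^ 2) /
        (∫ r in (0 : ℝ)..R, (φ r) ^ 2 * r ^ (d - 1)) }

open Set

theorem radial_trace_le {φ : ℝ → ℝ} (hφ : ContDiff ℝ 1 φ) (k : ℕ) {R c : ℝ} (hR : 0 ≤ R)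
    (hc : 0 < c) :
    R ^ (k + 1) * φ R ^ 2 ≤ c * (∫ r in (0 : ℝ)..R, deriv φ r ^ 2 * r ^ k) +
      (R ^ 2 / c + (k + 1)) * ∫ r in (0 : ℝ)..R, φ r ^ 2 * r ^ k := by
  have hφc : Continuous φ := hφ.continuous
  have hφ' : Continuous (deriv φ) := hφ.continuous_deriv le_rfl
  have hFTC : ∫ r in (0 : ℝ)..R, (2 * φ r * deriv φ r * r ^ (k + 1) + (k + 1) * (φ r ^ 2 * r ^ k))
      = R ^ (k + 1) * φ R ^ 2 := by
    have hderiv (r : ℝ) : HasDerivAt (fun r => r ^ (k + 1) * φ r ^ 2)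
        (2 * φ r * deriv φ r * r ^ (k + 1) + (k + 1) * (φ r ^ 2 * r ^ k)) r := by
      refine ((hasDerivAt_pow (k + 1) r).mul
        ((hφ.differentiable one_ne_zero r).hasDerivAt.fun_pow 2)).congr_deriv ?_
      simp only [Nat.add_sub_cancel, Nat.cast_add, Nat.cast_one, Nat.cast_ofNat]
      ring
    rw [integral_eq_sub_of_hasDerivAt (fun r _ => hderiv r)
      (Continuous.intervalIntegrable (by fun_prop) _ _)]
    simp
  have hpointwise : ∀ r ∈ Icc 0 R,
      2 * φ r * deriv φ r * r ^ (k + 1) + (k + 1) * (φ r ^ 2 * r ^ k) ≤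
        c * (deriv φ r ^ 2 * r ^ k) + (R ^ 2 / c + (k + 1)) * (φ r ^ 2 * r ^ k) := by
    rintro r ⟨hr0, hrR⟩
    have hamgm : 2 * φ r * deriv φ r * r ≤ c * deriv φ r ^ 2 + φ r ^ 2 * R ^ 2 / c := by
      have hsq : 0 ≤ (c * deriv φ r - φ r * r) ^ 2 / c := by positivity
      have hrR2 : φ r ^ 2 * r ^ 2 ≤ φ r ^ 2 * R ^ 2 := by gcongr
      have hexp : (c * deriv φ r - φ r * r) ^ 2 / c
          = c * deriv φ r ^ 2 - 2 * φ r * deriv φ r * r + φ r ^ 2 * r ^ 2 / c := by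
        field_simp; ring
      have : φ r ^ 2 * r ^ 2 / c ≤ φ r ^ 2 * R ^ 2 / c := by gcongr
      linarith
    have := mul_le_mul_of_nonneg_right hamgm (pow_nonneg hr0 k)
    rw [pow_succ]
    linear_combination this
  calc R ^ (k + 1) * φ R ^ 2
      = ∫ r in (0 : ℝ)..R, (2 * φ r * deriv φ r * r ^ (k + 1) + (k + 1) * (φ r ^ 2 * r ^ k)) :=
        hFTC.symm
    _ ≤ ∫ r in (0 : ℝ)..R,
          (c * (deriv φ r ^ 2 * r ^ k) + (R ^ 2 / c + (k + 1)) * (φ r ^ 2 * r ^ k)) :=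
        integral_mono_on hR (Continuous.intervalIntegrable (by fun_prop) _ _)
          (Continuous.intervalIntegrable (by fun_prop) _ _) hpointwise
    _ = _ := by
        rw [intervalIntegral.integral_add, intervalIntegral.integral_const_mul,
          intervalIntegral.integral_const_mul] <;>
          exact Continuous.intervalIntegrable (by fun_prop) _ _

noncomputable def radialRayleighQuotient (k : ℕ) (R α : ℝ) (φ : ℝ → ℝ) : ℝ :=
  ((∫ r in (0 : ℝ)..R, deriv φ r ^ 2 * r ^ k) + α * R ^ k * φ R ^ 2) /
    ∫ r in (0 : ℝ)..R, φ r ^ 2 * r ^ k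

theorem le_radialRayleighQuotient {φ : ℝ → ℝ} (hφ : ContDiff ℝ 1 φ) (k : ℕ) {R α : ℝ}
    (hR : 0 < R) (hα : α < 0) :
    -α ^ 2 + (k + 1) / R * α ≤ radialRayleighQuotient k R α φ := by
  rw [radialRayleighQuotient]
  set N := ∫ r in (0 : ℝ)..R, deriv φ r ^ 2 * r ^ k
  set D := ∫ r in (0 : ℝ)..R, φ r ^ 2 * r ^ k
  have hD : 0 ≤ D :=
    integral_nonneg hR.le fun r hr => mul_nonneg (sq_nonneg _) (pow_nonneg hr.1 _)
  have hbound_neg : -α ^ 2 + (k + 1) / R * α ≤ 0 := by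
    have : 0 ≤ (k + 1) / R := by positivity
    nlinarith [sq_nonneg α]
  rcases hD.eq_or_lt with hD0 | hDpos
  · rwa [← hD0, div_zero]
  rw [le_div_iff₀ hDpos]
  -- `c = R / -α` makes the coefficient of `N` exactly `1` after scaling by `-α / R`
  have htrace := mul_le_mul_of_nonneg_left (radial_trace_le hφ k hR.le (c := R / -α)
    (div_pos hR (neg_pos.2 hα))) (div_pos (neg_pos.2 hα) hR).le
  have hlhs : -α / R * (R ^ (k + 1) * φ R ^ 2) = -(α * R ^ k * φ R ^ 2) := by
    field_simp; ring
  have hrhs : -α / R * (R / -α * N + (R ^ 2 / (R / -α) + (k + 1)) * D)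
      = N - (-α ^ 2 + (k + 1) / R * α) * D := by
    have := hα.ne
    field_simp; ring
  linarith

theorem lam1Ball_le_radialRayleighQuotient {d : ℕ} {R α : ℝ} (hR : 0 < R) (hα : α < 0)
    {φ : ℝ → ℝ} (hφ : ContDiff ℝ 1 φ) (hD : ∫ r in (0 : ℝ)..R, φ r ^ 2 * r ^ (d - 1) ≠ 0) :
    lam1Ball d R α ≤ radialRayleighQuotient (d - 1) R α φ :=
  csInf_le ⟨_, by rintro q ⟨ψ, hψ, -, rfl⟩; exact le_radialRayleighQuotient hψ _ hR hα⟩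
    ⟨φ, hφ, hD, rfl⟩

theorem integral_sq_mul_pow_pos {φ : ℝ → ℝ} (hφ : Continuous φ) (k : ℕ) {R : ℝ} (hR : 0 < R)
    (hφ0 : ∀ r ∈ Ioo 0 R, φ r ≠ 0) : 0 < ∫ r in (0 : ℝ)..R, φ r ^ 2 * r ^ k :=
  intervalIntegral_pos_of_pos_on (Continuous.intervalIntegrable (by fun_prop) _ _)
    (fun r hr => by have hφr := hφ0 r hr; have hr0 := hr.1; positivity) hR

theorem mul_integral_exp_mul_pow_lt (m : ℕ) (γ : ℝ) {R : ℝ} (hR : 0 < R) :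
    ((m + 1) / R - γ) * ∫ r in (0 : ℝ)..R, Real.exp (γ * (R - r)) * r ^ (m + 1) < R ^ (m + 1) := by
  have hFTC : ∫ r in (0 : ℝ)..R, ((m + 1) * (Real.exp (γ * (R - r)) * r ^ m * (1 - r / R)) +
      ((m + 1) / R - γ) * (Real.exp (γ * (R - r)) * r ^ (m + 1))) = R ^ (m + 1) := by
    have hderiv (r : ℝ) : HasDerivAt (fun r => Real.exp (γ * (R - r)) * r ^ (m + 1))
        ((m + 1) * (Real.exp (γ * (R - r)) * r ^ m * (1 - r / R)) +
          ((m + 1) / R - γ) * (Real.exp (γ * (R - r)) * r ^ (m + 1))) r := by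
      refine ((((hasDerivAt_id r).const_sub R).const_mul γ).exp.mul
        (hasDerivAt_pow (m + 1) r)).congr_deriv ?_
      simp only [id]
      field_simp
      push_cast
      ring
    rw [integral_eq_sub_of_hasDerivAt (fun r _ => hderiv r)
      (Continuous.intervalIntegrable (by fun_prop) _ _)]
    simp
  have hpos :
      0 < ∫ r in (0 : ℝ)..R, (m + 1) * (Real.exp (γ * (R - r)) * r ^ m * (1 - r / R)) := by
    refine intervalIntegral_pos_of_pos_on (Continuous.intervalIntegrable (by fun_prop) _ _)
      (fun r hr => ?_) hR
    have : 0 < 1 - r / R := by rw [sub_pos, div_lt_one hR]; exact hr.2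
    have hr0 := hr.1
    positivity
  rw [intervalIntegral.integral_add (Continuous.intervalIntegrable (by fun_prop) _ _)
    (Continuous.intervalIntegrable (by fun_prop) _ _), intervalIntegral.integral_const_mul,
    intervalIntegral.integral_const_mul] at hFTC
  rw [intervalIntegral.integral_const_mul] at hpos
  linarith

theorem radialRayleighQuotient_exp_lt (m : ℕ) {R α : ℝ} (hR : 0 < R) (hα : α < 0) :
    radialRayleighQuotient (m + 1) R α (fun r => Real.exp (α * (R - r))) <
      -α ^ 2 + (m + 1) / R * α := by
  set φ : ℝ → ℝ := fun r => Real.exp (α * (R - r))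
  have hderiv (r : ℝ) : deriv φ r = -α * φ r := by
    refine (((hasDerivAt_id r).const_sub R).const_mul α).exp.deriv.trans ?_
    simp only [φ, id]; ring
  have hsq (r : ℝ) : φ r ^ 2 = Real.exp (2 * α * (R - r)) := by
    rw [← Real.exp_nat_mul]; push_cast; ring_nf
  set D := ∫ r in (0 : ℝ)..R, φ r ^ 2 * r ^ (m + 1)
  have hD : 0 < D := integral_sq_mul_pow_pos (by fun_prop) _ hR fun r _ => (Real.exp_pos _).ne'
  have hN : ∫ r in (0 : ℝ)..R, deriv φ r ^ 2 * r ^ (m + 1) = α ^ 2 * D := by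
    simp_rw [hderiv, mul_pow, neg_sq, mul_assoc]
    exact intervalIntegral.integral_const_mul _ _
  have hexp : ((m + 1) / R - 2 * α) * D < R ^ (m + 1) := by
    simpa only [D, hsq] using mul_integral_exp_mul_pow_lt m (2 * α) hR
  rw [radialRayleighQuotient, hN, div_lt_iff₀ hD]
  simp only [φ, sub_self, mul_zero, Real.exp_zero, one_pow, mul_one]
  linear_combination mul_lt_mul_of_neg_left hexp hα

theorem lam1Ball_upper_bound (d : ℕ) (hd : 2 ≤ d) (R α : ℝ) (hR : 0 < R) (hα : α < 0) :
    lam1Ball d R α < -α ^ 2 + ((d : ℝ) - 1) / R * α := by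
  obtain ⟨m, rfl⟩ : ∃ m, d = m + 2 := ⟨d - 2, by omega⟩
  have hD : ∫ r in (0 : ℝ)..R, Real.exp (α * (R - r)) ^ 2 * r ^ (m + 1) ≠ 0 :=
    (integral_sq_mul_pow_pos (by fun_prop) _ hR fun r _ => (Real.exp_pos _).ne').ne'
  calc lam1Ball (m + 2) R α
      ≤ radialRayleighQuotient (m + 1) R α (fun r => Real.exp (α * (R - r))) :=
        lam1Ball_le_radialRayleighQuotient hR hα (by fun_prop) hD
    _ < -α ^ 2 + (m + 1) / R * α := radialRayleighQuotient_exp_lt m hR hα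
    _ = -α ^ 2 + (((m + 2 : ℕ) : ℝ) - 1) / R * α := by push_cast; ring
end

section
/- Let d ≥ 2, R > 0, α < 0, and let λ₁^α(B_R) denote the first Robin eigenvalue of the ball B_R ⊂ ℝ^d. Then λ₁^α(B_R) > −(1/2)α² + ((d−1)/(2R))α + (α/(2R))·sqrt((d−1−αR)² + 4d). -/
/-!
If `φ` is the radial Robin eigenfunction, `h = φ'/φ` solves the Riccati equation
`r h' + (d - 1) h + r h² = -λ r` with `h(R) = -α`. Conversely, for any `C¹` function `h`,
`φ'² r^{d-1} - (h r^{d-1} φ²)' = (φ' - h φ)² r^{d-1} - φ² r^{d-2} (r h' + (d-1) h + r h²)`,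
and integrating shows that a supersolution `r h' + (d - 1) h + r h² ≤ c r` with `h(R) ≥ -α`
bounds every Rayleigh quotient below by `-c`.

Amos' inequality suggests the profile `h₀(r) = x r / (a + √(x r² + (a + 1)²))` with
`a = (d - 1)/2`. It is a supersolution with `c = x` and a slack of order `r³`, and
`h₀(R) = -α` determines `x`, which is minus the claimed bound. Subtracting a small bump
`M r (R² - r²)`, which vanishes at `R`, trades the `r³` slack for a uniform margin `d M R² r`
and makes the inequality strict.
-/

open MeasureTheory intervalIntegral

open Set

noncomputable def radialRiccati (m : ℝ) (h : ℝ → ℝ) (r : ℝ) : ℝ :=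
  r * deriv h r + m * h r + r * h r ^ 2

theorem neg_mul_le_sq_sub_flux_of_riccati {n : ℕ} {r c y y' u p : ℝ} (hr : 0 ≤ r)
    (hric : r * y' + (n + 1) * y + r * y ^ 2 ≤ c * r) :
    -c * (u ^ 2 * r ^ (n + 1)) ≤
      p ^ 2 * r ^ (n + 1) - ((y' * r ^ (n + 1) + (n + 1) * y * r ^ n) * u ^ 2 +
        2 * y * u * p * r ^ (n + 1)) := by
  have hsq : 0 ≤ (p - y * u) ^ 2 * r ^ (n + 1) := by positivity
  have hρ : 0 ≤ u ^ 2 * r ^ n * (c * r - (r * y' + (n + 1) * y + r * y ^ 2)) := by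
    have := sub_nonneg.2 hric
    positivity
  linear_combination hsq + hρ

theorem neg_mul_integral_le_rayleigh_numerator {n : ℕ} {R α c : ℝ} (hR : 0 ≤ R)
    {h φ : ℝ → ℝ} (hh : ContDiff ℝ 1 h) (hφ : ContDiff ℝ 1 φ) (hbd : -α ≤ h R)
    (hric : ∀ r ∈ Icc 0 R, radialRiccati (n + 1) h r ≤ c * r) :
    -c * ∫ r in (0 : ℝ)..R, φ r ^ 2 * r ^ (n + 1) ≤
      (∫ r in (0 : ℝ)..R, deriv φ r ^ 2 * r ^ (n + 1)) + α * R ^ (n + 1) * φ R ^ 2 := by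
  set D : ℝ → ℝ := fun r => (deriv h r * r ^ (n + 1) + (n + 1) * h r * r ^ n) * φ r ^ 2 +
    2 * h r * φ r * deriv φ r * r ^ (n + 1)
  have hD : ∀ r, HasDerivAt (fun r => h r * r ^ (n + 1) * φ r ^ 2) (D r) r := fun r => by
    have hφr := (hφ.differentiable one_ne_zero r).hasDerivAt
    refine (((hh.differentiable one_ne_zero r).hasDerivAt.mul (hasDerivAt_pow (n + 1) r)).mul
      (hφr.pow 2)).congr_deriv ?_
    simp only [D, Nat.add_sub_cancel, Pi.mul_apply, Pi.pow_apply]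
    push_cast
    ring
  have hφc := hφ.continuous
  have hφ'c := hφ.continuous_deriv le_rfl
  have hhc := hh.continuous
  have hh'c := hh.continuous_deriv le_rfl
  have hDc : Continuous D := by fun_prop
  have hFTC : ∫ r in (0 : ℝ)..R, D r = h R * R ^ (n + 1) * φ R ^ 2 := by
    rw [intervalIntegral.integral_eq_sub_of_hasDerivAt (fun r _ => hD r)
      (hDc.intervalIntegrable 0 R)]
    simp
  have hpt : ∀ r ∈ Icc 0 R,
      -c * (φ r ^ 2 * r ^ (n + 1)) ≤ deriv φ r ^ 2 * r ^ (n + 1) - D r :=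
    fun r hr => neg_mul_le_sq_sub_flux_of_riccati hr.1 (hric r hr)
  have hbd' : -h R * (R ^ (n + 1) * φ R ^ 2) ≤ α * (R ^ (n + 1) * φ R ^ 2) :=
    mul_le_mul_of_nonneg_right (by linarith) (by positivity)
  calc -c * ∫ r in (0 : ℝ)..R, φ r ^ 2 * r ^ (n + 1)
      = ∫ r in (0 : ℝ)..R, -c * (φ r ^ 2 * r ^ (n + 1)) :=
        (intervalIntegral.integral_const_mul _ _).symm
    _ ≤ ∫ r in (0 : ℝ)..R, (deriv φ r ^ 2 * r ^ (n + 1) - D r) :=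
        intervalIntegral.integral_mono_on hR
          ((by fun_prop : Continuous _).intervalIntegrable _ _)
          ((by fun_prop : Continuous _).intervalIntegrable _ _) hpt
    _ = (∫ r in (0 : ℝ)..R, deriv φ r ^ 2 * r ^ (n + 1)) - h R * R ^ (n + 1) * φ R ^ 2 := by
        rw [intervalIntegral.integral_sub
          ((by fun_prop : Continuous _).intervalIntegrable _ _) (hDc.intervalIntegrable 0 R), hFTC]
    _ ≤ _ := by linarith

theorem neg_le_lam1Ball_of_riccati {d : ℕ} (hd : 2 ≤ d) {R α c : ℝ} (hR : 0 < R)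
    {h : ℝ → ℝ} (hh : ContDiff ℝ 1 h) (hbd : -α ≤ h R)
    (hric : ∀ r ∈ Icc 0 R, radialRiccati ((d : ℝ) - 1) h r ≤ c * r) :
    -c ≤ lam1Ball d R α := by
  obtain ⟨n, rfl⟩ : ∃ n, d = n + 2 := ⟨d - 2, by omega⟩
  have hcoef : ((n + 2 : ℕ) : ℝ) - 1 = n + 1 := by push_cast; ring
  rw [hcoef] at hric
  rw [lam1Ball, show n + 2 - 1 = n + 1 by omega]
  have hone : 0 < ∫ r in (0 : ℝ)..R, (1 : ℝ) ^ 2 * r ^ (n + 1) := by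
    simp only [one_pow, one_mul, integral_pow, ne_eq, add_eq_zero, one_ne_zero, and_false,
      not_false_eq_true, zero_pow, sub_zero]
    positivity
  refine le_csInf ⟨_, fun _ => 1, contDiff_const, hone.ne', rfl⟩ ?_
  rintro q ⟨φ, hφ, hden, rfl⟩
  have hden_nonneg : 0 ≤ ∫ r in (0 : ℝ)..R, φ r ^ 2 * r ^ (n + 1) :=
    intervalIntegral.integral_nonneg hR.le fun r hr => by have := hr.1; positivity
  rw [le_div_iff₀ (hden_nonneg.lt_of_ne' hden)]
  exact neg_mul_integral_le_rayleigh_numerator hR.le hh hφ hbd hric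

theorem le_sqrt_mul_sq_add_sq (b : ℝ) {x : ℝ} (hx : 0 ≤ x) (r : ℝ) :
    b ≤ √(x * r ^ 2 + b ^ 2) :=
  Real.le_sqrt_of_sq_le (by nlinarith [sq_nonneg r])

/-- Amos' lower bound for `√x I_{μ+1}(√x r) / I_μ(√x r)`, with `a = μ + 1/2`. -/
noncomputable def amosProfile (a x r : ℝ) : ℝ := x * r / (a + √(x * r ^ 2 + (a + 1) ^ 2))

section amosProfile

variable {a x : ℝ}

theorem contDiff_amosProfile {n : WithTop ℕ∞} (ha : 0 ≤ a) (hx : 0 ≤ x) :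
    ContDiff ℝ n (amosProfile a x) := by
  have hpos := le_sqrt_mul_sq_add_sq (a + 1) hx
  refine (contDiff_const.mul contDiff_id).div
    (contDiff_const.add ((by fun_prop : ContDiff ℝ n _).sqrt fun r => ?_)) fun r => ?_
  · nlinarith [sq_nonneg r]
  · linarith [hpos r]

theorem hasDerivAt_amosProfile (ha : 0 ≤ a) (hx : 0 ≤ x) (r : ℝ) :
    HasDerivAt (amosProfile a x)
      (x * (a * √(x * r ^ 2 + (a + 1) ^ 2) + (a + 1) ^ 2) /
        (√(x * r ^ 2 + (a + 1) ^ 2) * (a + √(x * r ^ 2 + (a + 1) ^ 2)) ^ 2)) r := by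
  have hw := le_sqrt_mul_sq_add_sq (a + 1) hx r
  have harg : 0 < x * r ^ 2 + (a + 1) ^ 2 := by positivity
  have hsq : HasDerivAt (fun r => x * r ^ 2 + (a + 1) ^ 2) (x * (2 * r)) r := by
    simpa using ((hasDerivAt_pow 2 r).const_mul x).add_const ((a + 1) ^ 2)
  have := ((hasDerivAt_id r).const_mul x).div ((hsq.sqrt harg.ne').const_add a)
    (by linarith)
  refine this.congr_deriv ?_
  have hw2 : √(x * r ^ 2 + (a + 1) ^ 2) ^ 2 = x * r ^ 2 + (a + 1) ^ 2 := Real.sq_sqrt harg.le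
  set w := √(x * r ^ 2 + (a + 1) ^ 2)
  have hw0 : w ≠ 0 := by positivity
  have haw : a + w ≠ 0 := by positivity
  simp only [id, mul_one]
  field_simp
  linear_combination x * hw2

theorem amosProfile_nonneg (ha : 0 ≤ a) (hx : 0 ≤ x) {r : ℝ} (hr : 0 ≤ r) :
    0 ≤ amosProfile a x r :=
  div_nonneg (mul_nonneg hx hr) (by linarith [le_sqrt_mul_sq_add_sq (a + 1) hx r])

theorem radialRiccati_amosProfile (ha : 0 ≤ a) (hx : 0 ≤ x) (r : ℝ) :
    radialRiccati (2 * a) (amosProfile a x) r = x * r - x ^ 2 * (a + 1) * r ^ 3 /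
      (√(x * r ^ 2 + (a + 1) ^ 2) * (√(x * r ^ 2 + (a + 1) ^ 2) + a + 1) *
        (a + √(x * r ^ 2 + (a + 1) ^ 2)) ^ 2) := by
  have hw2 : √(x * r ^ 2 + (a + 1) ^ 2) ^ 2 = x * r ^ 2 + (a + 1) ^ 2 :=
    Real.sq_sqrt (by positivity)
  rw [radialRiccati, (hasDerivAt_amosProfile ha hx r).deriv, amosProfile]
  set w := √(x * r ^ 2 + (a + 1) ^ 2)
  have hw0 : w ≠ 0 := by positivity
  have haw : a + w ≠ 0 := by positivity
  have hwa : w + a + 1 ≠ 0 := by positivity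
  field_simp
  linear_combination -(r * x * (w * (w + a + 1) + a + 1)) * hw2

theorem exists_radialRiccati_amosProfile_le (ha : 0 ≤ a) (hx : 0 < x) (R : ℝ) :
    ∃ K > 0, ∀ r ∈ Icc 0 R,
      radialRiccati (2 * a) (amosProfile a x) r ≤ x * r - K * r ^ 3 := by
  set W := √(x * R ^ 2 + (a + 1) ^ 2)
  refine ⟨x ^ 2 * (a + 1) / (W * (W + a + 1) * (a + W) ^ 2), by positivity, fun r hr => ?_⟩
  have hwW : √(x * r ^ 2 + (a + 1) ^ 2) ≤ W :=
    Real.sqrt_le_sqrt (by gcongr; exacts [hr.1, hr.2])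
  rw [radialRiccati_amosProfile ha hx.le, div_mul_eq_mul_div, mul_right_comm _ _ (r ^ 3)]
  have := hr.1
  gcongr

theorem amosProfile_boundary_eq (ha : 0 ≤ a) {β R : ℝ} (hβ : 0 < β) (hR : 0 < R) :
    amosProfile a (β * (2 * a + β * R + √((2 * a + β * R) ^ 2 + 4 * (2 * a + 1))) / (2 * R)) R
      = β := by
  set s := √((2 * a + β * R) ^ 2 + 4 * (2 * a + 1))
  have hs2 : s ^ 2 = (2 * a + β * R) ^ 2 + 4 * (2 * a + 1) := Real.sq_sqrt (by positivity)
  have hW : √(β * (2 * a + β * R + s) / (2 * R) * R ^ 2 + (a + 1) ^ 2) = (s + β * R) / 2 := by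
    rw [Real.sqrt_eq_iff_mul_self_eq_of_pos (by positivity)]
    field_simp
    linear_combination hs2
  rw [amosProfile, hW, div_eq_iff (by positivity)]
  field_simp
  ring

end amosProfile

theorem exists_radialRiccati_le_of_slack {m x K R : ℝ} (hm : 0 ≤ m) (hK : 0 < K) (hR : 0 < R)
    {h : ℝ → ℝ} (hh : ContDiff ℝ 1 h) (hpos : ∀ r ∈ Icc 0 R, 0 ≤ h r)
    (hslack : ∀ r ∈ Icc 0 R, radialRiccati m h r ≤ x * r - K * r ^ 3) :
    ∃ g : ℝ → ℝ, ContDiff ℝ 1 g ∧ g R = h R ∧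
      ∃ c < x, ∀ r ∈ Icc 0 R, radialRiccati m g r ≤ c * r := by
  obtain ⟨M, hM, hMK⟩ : ∃ M > 0, M * (m + 3) + M ^ 2 * R ^ 4 ≤ K := by
    have hden : 0 < m + 4 + K * R ^ 4 := by positivity
    set M := K / (m + 4 + K * R ^ 4)
    have hM : 0 < M := by positivity
    have hMK : M * (m + 4 + K * R ^ 4) = K := div_mul_cancel₀ _ hden.ne'
    have hMle : M ≤ K := div_le_self hK.le (by nlinarith [pow_pos hR 4])
    refine ⟨M, hM, ?_⟩
    nlinarith [mul_le_mul_of_nonneg_left hMle (by positivity : 0 ≤ M * R ^ 4)]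
  refine ⟨fun r => h r - M * r * (R ^ 2 - r ^ 2), by fun_prop, by simp,
    x - (m + 1) * M * R ^ 2, sub_lt_self x (by positivity), fun r hr => ?_⟩
  have hderiv : deriv (fun r => h r - M * r * (R ^ 2 - r ^ 2)) r =
      deriv h r - M * (R ^ 2 - 3 * r ^ 2) := by
    refine ((hh.differentiable one_ne_zero r).hasDerivAt.sub
      (((hasDerivAt_id r).const_mul M).mul ((hasDerivAt_pow 2 r).const_sub (R ^ 2)))).deriv.trans ?_
    simp only [id]
    ring
  have hexpand : radialRiccati m (fun r => h r - M * r * (R ^ 2 - r ^ 2)) r =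
      radialRiccati m h r - (m + 1) * M * R ^ 2 * r + (m + 3) * M * r ^ 3
        - 2 * M * r ^ 2 * (R ^ 2 - r ^ 2) * h r + M ^ 2 * r ^ 3 * (R ^ 2 - r ^ 2) ^ 2 := by
    rw [radialRiccati, hderiv, radialRiccati]
    ring
  obtain ⟨hr0, hrR⟩ := hr
  have hr2 : 0 ≤ R ^ 2 - r ^ 2 := by nlinarith
  have hcross : 0 ≤ 2 * M * r ^ 2 * (R ^ 2 - r ^ 2) * h r := by
    have := hpos r ⟨hr0, hrR⟩
    positivity
  have hsq : M ^ 2 * r ^ 3 * (R ^ 2 - r ^ 2) ^ 2 ≤ M ^ 2 * r ^ 3 * R ^ 4 := by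
    gcongr
    nlinarith
  have hK3 : (M * (m + 3) + M ^ 2 * R ^ 4) * r ^ 3 ≤ K * r ^ 3 := by gcongr
  nlinarith [hslack r ⟨hr0, hrR⟩]

theorem lam1Ball_lower_bound (d : ℕ) (hd : 2 ≤ d) (R α : ℝ) (hR : 0 < R) (hα : α < 0) :
    lam1Ball d R α >
      -(1 / 2) * α ^ 2 + ((d : ℝ) - 1) / (2 * R) * α
        + α / (2 * R) * Real.sqrt (((d : ℝ) - 1 - α * R) ^ 2 + 4 * d) := by
  set a : ℝ := ((d : ℝ) - 1) / 2
  have h2a : 2 * a = d - 1 := by ring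
  have ha : 0 ≤ a := by
    have : (2 : ℝ) ≤ d := by exact_mod_cast hd
    linarith
  have hβ : 0 < -α := neg_pos.2 hα
  set s := √((2 * a + -α * R) ^ 2 + 4 * (2 * a + 1))
  set x := -α * (2 * a + -α * R + s) / (2 * R)
  have hx : 0 < x := by
    have := mul_pos hβ hR
    have : 0 ≤ s := Real.sqrt_nonneg _
    exact div_pos (mul_pos hβ (by linarith)) (by positivity)
  obtain ⟨K, hK, hslack⟩ := exists_radialRiccati_amosProfile_le ha hx R
  obtain ⟨h, hh, hhR, c, hcx, hric⟩ := exists_radialRiccati_le_of_slack (by positivity) hK hR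
    (contDiff_amosProfile ha hx.le) (fun r hr => amosProfile_nonneg ha hx.le hr.1) hslack
  have hbd : h R = -α := hhR.trans (amosProfile_boundary_eq ha hβ hR)
  rw [h2a] at hric
  have hlam := neg_le_lam1Ball_of_riccati hd hR hh hbd.ge hric
  have hx_eq : -(1 / 2) * α ^ 2 + ((d : ℝ) - 1) / (2 * R) * α
      + α / (2 * R) * √(((d : ℝ) - 1 - α * R) ^ 2 + 4 * d) = -x := by
    simp only [x, s, h2a]
    field_simp
    ring_nf
  rw [gt_iff_lt, hx_eq]
  linarith
end

section
/- Let d ≥ 2, α < 0, and 0 < R₁ < R₂. The first Robin eigenvalue of the spherical shell A_{R₁,R₂} = B_{R₂} \ closure(B_{R₁}) in ℝ^d satisfies λ₁^α(A_{R₁,R₂}) > −α² + ((d−1)/R₂ + 2/(R₂−R₁))·α. -/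
/-!
Following the paper, write the Robin numerator with the help of an auxiliary function `η` with
`η(R₁) = -1`, `η(R₂) = 1`: since `α (η φ² r^{d-1})'` integrates to exactly the two boundary terms,
completing the square gives
`∫ φ'² r^{d-1} + α (boundary terms) = ∫ (φ' + α η φ)² r^{d-1} + ∫ φ² f_η r^{d-1}`
with `f_η = -α² η² + α η' + α (d-1) η / r`, so `λ₁ ≥ min f_η`. For the paper's linear `η`,
`f_η ≥ -α² + ((d-1)/R₂ + 2/(R₂-R₁)) α` with equality only at `r = R₂`. Adding to `η` a small bump
`ε (R₂ - r)(r - R₁)` raises `η'` at `R₂` and turns this into the uniform bound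
`f_η ≥ -α² + ((d-1)/R₂ + 2/(R₂-R₁)) α - α ε (R₂ - R₁)`, which gives the strict inequality.
-/

open MeasureTheory intervalIntegral

/-- The first Robin eigenvalue of the spherical shell `A_{R₁,R₂} ⊂ ℝ^d`, given by the
radial Rayleigh quotient
`(∫_{R₁}^{R₂} φ'(r)² r^{d-1} dr + α R₁^{d-1} φ(R₁)² + α R₂^{d-1} φ(R₂)²) /
  ∫_{R₁}^{R₂} φ(r)² r^{d-1} dr`
over nonzero `C¹` functions `φ` on `[R₁,R₂]`. -/
noncomputable def lam1Shell (d : ℕ) (R₁ R₂ α : ℝ) : ℝ :=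
  sInf { q : ℝ | ∃ φ : ℝ → ℝ, ContDiff ℝ 1 φ ∧
    (∫ r in R₁..R₂, (φ r) ^ 2 * r ^ (d - 1)) ≠ 0 ∧
    q = ((∫ r in R₁..R₂, (deriv φ r) ^ 2 * r ^ (d - 1))
          + α * R₁ ^ (d - 1) * (φ R₁) ^ 2 + α * R₂ ^ (d - 1) * (φ R₂) ^ 2) /
        (∫ r in R₁..R₂, (φ r) ^ 2 * r ^ (d - 1)) }

open Set

noncomputable section

def robinEnergy (w : ℝ → ℝ) (a b α : ℝ) (φ : ℝ → ℝ) : ℝ :=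
  (∫ r in a..b, deriv φ r ^ 2 * w r) + α * w a * φ a ^ 2 + α * w b * φ b ^ 2

theorem mul_integral_le_robinEnergy {a b α c : ℝ} {φ η η' w w' : ℝ → ℝ} (hab : a ≤ b)
    (hφ : ContDiff ℝ 1 φ) (hη : ∀ r, HasDerivAt η (η' r) r) (hη' : Continuous η')
    (hw : ∀ r, HasDerivAt w (w' r) r) (hw' : Continuous w')
    (hηa : η a = -1) (hηb : η b = 1) (hw₀ : ∀ r ∈ Icc a b, 0 ≤ w r)
    (hc : ∀ r ∈ Icc a b,
      c * w r ≤ -α ^ 2 * η r ^ 2 * w r + α * η' r * w r + α * η r * w' r) :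
    c * ∫ r in a..b, φ r ^ 2 * w r ≤ robinEnergy w a b α φ := by
  have hφ' : ∀ r, HasDerivAt φ (deriv φ r) r :=
    fun r => (hφ.differentiable one_ne_zero r).hasDerivAt
  have hφc : Continuous (deriv φ) := hφ.continuous_deriv le_rfl
  have hηc : Continuous η := continuous_iff_continuousAt.2 fun r => (hη r).continuousAt
  have hwc : Continuous w := continuous_iff_continuousAt.2 fun r => (hw r).continuousAt
  set P' : ℝ → ℝ := fun r =>
    η' r * φ r ^ 2 * w r + η r * (2 * φ r * deriv φ r) * w r + η r * φ r ^ 2 * w' r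
  have hP'c : Continuous P' := by fun_prop
  have hP : ∀ r, HasDerivAt (fun r => η r * φ r ^ 2 * w r) (P' r) r := fun r =>
    (((hη r).mul ((hφ' r).pow 2)).mul (hw r)).congr_deriv
      (by simp only [P', Pi.mul_apply, Pi.pow_apply]; ring)
  have hboundary : ∫ r in a..b, P' r = φ a ^ 2 * w a + φ b ^ 2 * w b := by
    rw [integral_eq_sub_of_hasDerivAt (fun r _ => hP r) (hP'c.intervalIntegrable _ _)]
    simp only [hηa, hηb]
    ring
  calc c * ∫ r in a..b, φ r ^ 2 * w r = ∫ r in a..b, c * (φ r ^ 2 * w r) :=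
        (intervalIntegral.integral_const_mul _ _).symm
    _ ≤ ∫ r in a..b, (deriv φ r ^ 2 * w r + α * P' r) := by
        refine integral_mono_on hab ((by fun_prop : Continuous _).intervalIntegrable _ _)
          ((by fun_prop : Continuous _).intervalIntegrable _ _) fun r hr => ?_
        have hsq := mul_nonneg (sq_nonneg (deriv φ r + α * η r * φ r)) (hw₀ r hr)
        have hf := mul_le_mul_of_nonneg_left (hc r hr) (sq_nonneg (φ r))
        simp only [P']
        nlinarith
    _ = robinEnergy w a b α φ := by
        rw [intervalIntegral.integral_add ((by fun_prop : Continuous _).intervalIntegrable _ _)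
          ((by fun_prop : Continuous _).intervalIntegrable _ _),
          intervalIntegral.integral_const_mul, hboundary, robinEnergy]
        ring

def shellEta (R₁ R₂ ε r : ℝ) : ℝ :=
  (2 * r - (R₁ + R₂)) / (R₂ - R₁) + ε * ((R₂ - r) * (r - R₁))

section shellEta

variable {R₁ R₂ ε r : ℝ}

theorem shellEta_left (h : R₁ ≠ R₂) : shellEta R₁ R₂ ε R₁ = -1 := by
  rw [shellEta, sub_self, mul_zero, mul_zero, add_zero, div_eq_iff (sub_ne_zero.2 h.symm)]
  ring

theorem shellEta_right (h : R₁ ≠ R₂) : shellEta R₁ R₂ ε R₂ = 1 := by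
  rw [shellEta, sub_self, zero_mul, mul_zero, add_zero, div_eq_one_iff_eq (sub_ne_zero.2 h.symm)]
  ring

theorem hasDerivAt_shellEta (R₁ R₂ ε r : ℝ) :
    HasDerivAt (shellEta R₁ R₂ ε) (2 / (R₂ - R₁) + ε * (R₁ + R₂ - 2 * r)) r := by
  have h := ((((hasDerivAt_id r).const_mul 2).sub_const (R₁ + R₂)).div_const (R₂ - R₁)).add
    ((((hasDerivAt_id r).const_sub R₂).mul ((hasDerivAt_id r).sub_const R₁)).const_mul ε)
  exact h.congr_deriv (by simp only [id_eq]; ring)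

theorem sq_shellEta_le_one (h : R₁ < R₂) (hε : 0 ≤ ε) (hεL : ε * (R₂ - R₁) ^ 2 ≤ 2)
    (hr : r ∈ Icc R₁ R₂) : shellEta R₁ R₂ ε r ^ 2 ≤ 1 := by
  obtain ⟨hr₁, hr₂⟩ := hr
  have hL : 0 < R₂ - R₁ := sub_pos.2 h
  have hlow : -1 ≤ shellEta R₁ R₂ ε r := by
    have : -1 ≤ (2 * r - (R₁ + R₂)) / (R₂ - R₁) := by rw [le_div_iff₀ hL]; linarith
    have : 0 ≤ ε * ((R₂ - r) * (r - R₁)) := by positivity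
    rw [shellEta]; linarith
  have hup : shellEta R₁ R₂ ε r ≤ 1 := by
    have : ε * (r - R₁) * (R₂ - R₁) ≤ 2 := by nlinarith
    have key : 1 - shellEta R₁ R₂ ε r = (R₂ - r) * (2 - ε * (r - R₁) * (R₂ - R₁)) / (R₂ - R₁) := by
      rw [shellEta]; field_simp; ring
    have : 0 ≤ 1 - shellEta R₁ R₂ ε r := by rw [key]; apply div_nonneg <;> nlinarith
    linarith
  nlinarith

theorem mul_shellEta_div_add_le {κ : ℝ} (hR₁ : 0 < R₁) (h : R₁ < R₂) (hκ : 1 ≤ κ) (hε : 0 ≤ ε)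
    (hε' : 3 * ε * R₂ ^ 2 ≤ 1) (hr : r ∈ Icc R₁ R₂) :
    κ * shellEta R₁ R₂ ε r / r + 2 * ε * (R₂ - r) ≤ κ / R₂ := by
  obtain ⟨hr₁, hr₂⟩ := hr
  have hL : 0 < R₂ - R₁ := sub_pos.2 h
  have hr : 0 < r := hR₁.trans_le hr₁
  have hR₂ : 0 < R₂ := hR₁.trans h
  have key : κ / R₂ - (κ * shellEta R₁ R₂ ε r / r + 2 * ε * (R₂ - r)) =
      (R₂ - r) * (κ * (R₁ + R₂) - ε * (κ * (r - R₁) + 2 * r) * (R₂ * (R₂ - R₁))) /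
        (R₂ * (R₂ - R₁) * r) := by
    rw [shellEta]; field_simp; ring
  have hbump : κ * (r - R₁) + 2 * r ≤ 3 * κ * R₂ := by nlinarith
  have hgain : ε * (κ * (r - R₁) + 2 * r) * (R₂ * (R₂ - R₁)) ≤ κ * (R₁ + R₂) :=
    calc ε * (κ * (r - R₁) + 2 * r) * (R₂ * (R₂ - R₁))
        ≤ ε * (3 * κ * R₂) * (R₂ * (R₂ - R₁)) := by gcongr
      _ = κ * (R₂ - R₁) * (3 * ε * R₂ ^ 2) := by ring
      _ ≤ κ * (R₂ - R₁) * 1 := by gcongr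
      _ ≤ κ * (R₁ + R₂) := by nlinarith
  have : 0 ≤ κ / R₂ - (κ * shellEta R₁ R₂ ε r / r + 2 * ε * (R₂ - r)) := by
    rw [key]; apply div_nonneg <;> nlinarith [mul_pos (mul_pos hR₂ hL) hr]
  linarith

theorem le_shellEta_riccati {α κ : ℝ} (hR₁ : 0 < R₁) (h : R₁ < R₂) (hα : α ≤ 0) (hκ : 1 ≤ κ)
    (hε : 0 ≤ ε) (hε' : 3 * ε * R₂ ^ 2 ≤ 1) (hr : r ∈ Icc R₁ R₂) :
    -α ^ 2 + (κ / R₂ + 2 / (R₂ - R₁)) * α - α * ε * (R₂ - R₁) ≤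
      -α ^ 2 * shellEta R₁ R₂ ε r ^ 2 + α * (2 / (R₂ - R₁) + ε * (R₁ + R₂ - 2 * r)) +
        α * κ * shellEta R₁ R₂ ε r / r := by
  have hεL : ε * (R₂ - R₁) ^ 2 ≤ 2 := by nlinarith
  have hsq := sq_shellEta_le_one h hε hεL hr
  have hdiv := mul_shellEta_div_add_le hR₁ h hκ hε hε' hr
  rw [mul_assoc α κ, mul_div_assoc]
  nlinarith [mul_le_mul_of_nonpos_left hdiv hα]

theorem le_shellEta_riccati_pow {α : ℝ} {n : ℕ} (hR₁ : 0 < R₁) (h : R₁ < R₂) (hα : α ≤ 0)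
    (hn : 1 ≤ n) (hε : 0 ≤ ε) (hε' : 3 * ε * R₂ ^ 2 ≤ 1) (hr : r ∈ Icc R₁ R₂) :
    (-α ^ 2 + (n / R₂ + 2 / (R₂ - R₁)) * α - α * ε * (R₂ - R₁)) * r ^ n ≤
      -α ^ 2 * shellEta R₁ R₂ ε r ^ 2 * r ^ n +
        α * (2 / (R₂ - R₁) + ε * (R₁ + R₂ - 2 * r)) * r ^ n +
        α * shellEta R₁ R₂ ε r * (n * r ^ (n - 1)) := by
  have hr₀ : 0 < r := hR₁.trans_le hr.1
  have hpow : r ^ n = r * r ^ (n - 1) := by rw [← pow_succ']; congr 1; omega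
  calc _ ≤ (-α ^ 2 * shellEta R₁ R₂ ε r ^ 2 + α * (2 / (R₂ - R₁) + ε * (R₁ + R₂ - 2 * r)) +
          α * n * shellEta R₁ R₂ ε r / r) * r ^ n :=
        mul_le_mul_of_nonneg_right
          (le_shellEta_riccati hR₁ h hα (by exact_mod_cast hn) hε hε' hr) (by positivity)
    _ = _ := by rw [hpow]; field_simp

end shellEta

theorem le_lam1Shell {d : ℕ} {R₁ R₂ α c : ℝ} (h₁ : 0 < R₁) (h₁₂ : R₁ < R₂)
    (hc : ∀ φ : ℝ → ℝ, ContDiff ℝ 1 φ →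
      c * ∫ r in R₁..R₂, φ r ^ 2 * r ^ (d - 1) ≤ robinEnergy (· ^ (d - 1)) R₁ R₂ α φ) :
    c ≤ lam1Shell d R₁ R₂ α := by
  have hmass : ∀ φ : ℝ → ℝ, 0 ≤ ∫ r in R₁..R₂, φ r ^ 2 * r ^ (d - 1) := fun φ =>
    integral_nonneg h₁₂.le fun r hr => by have := h₁.trans_le hr.1; positivity
  refine le_csInf ⟨_, fun _ => 1, contDiff_const, ?_, rfl⟩ ?_
  · simp only [one_pow, one_mul]
    exact (intervalIntegral_pos_of_pos_on ((continuous_pow _).intervalIntegrable _ _)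
      (fun r hr => pow_pos (h₁.trans hr.1) _) h₁₂).ne'
  · rintro q ⟨φ, hφ, hne, rfl⟩
    exact (le_div_iff₀ ((hmass φ).lt_of_ne hne.symm)).2 (hc φ hφ)

end

theorem lam1Shell_lower_bound (d : ℕ) (hd : 2 ≤ d) (R₁ R₂ α : ℝ)
    (h₁ : 0 < R₁) (h₁₂ : R₁ < R₂) (hα : α < 0) :
    lam1Shell d R₁ R₂ α > -α ^ 2 + (((d : ℝ) - 1) / R₂ + 2 / (R₂ - R₁)) * α := by
  have hR₂ : 0 < R₂ := h₁.trans h₁₂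
  set ε := 1 / (3 * R₂ ^ 2)
  have hε : 3 * ε * R₂ ^ 2 = 1 := by simp only [ε]; field_simp
  have hgain : 0 < -α * ε * (R₂ - R₁) :=
    mul_pos (mul_pos (neg_pos.2 hα) (by positivity)) (sub_pos.2 h₁₂)
  have hle := le_lam1Shell (d := d) (α := α) h₁ h₁₂ fun φ hφ =>
    mul_integral_le_robinEnergy h₁₂.le hφ (hasDerivAt_shellEta R₁ R₂ ε) (by fun_prop)
      (hasDerivAt_pow (d - 1)) (by fun_prop) (shellEta_left h₁₂.ne) (shellEta_right h₁₂.ne)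
      (fun r hr => pow_nonneg (h₁.le.trans hr.1) _)
      fun r hr => le_shellEta_riccati_pow h₁ h₁₂ hα.le (by omega) (by positivity) hε.le hr
  rw [Nat.cast_sub (by omega), Nat.cast_one] at hle
  linarith
end

section
/- Let α < 0 and R > 0. The first Robin eigenvalue of the interval (−R,R) equals −k², where k is the smallest positive solution of −k/α = coth(Rk), and the map R ↦ λ₁^α((−R,R)) is strictly increasing in R. -/
open MeasureTheory intervalIntegral

/-- The first Robin eigenvalue of the interval `(a,b)` with boundary parameter `α`,
given by the Rayleigh quotient `(∫_a^b u'² + α(u(a)² + u(b)²)) / ∫_a^b u²`. -/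
noncomputable def lam1Int (α a b : ℝ) : ℝ :=
  sInf { q : ℝ | ∃ u : ℝ → ℝ, ContDiff ℝ 1 u ∧ (∫ x in a..b, (u x) ^ 2) ≠ 0 ∧
    q = ((∫ x in a..b, (deriv u x) ^ 2) + α * ((u a) ^ 2 + (u b) ^ 2)) /
        (∫ x in a..b, (u x) ^ 2) }

/-- The hyperbolic cotangent. -/
noncomputable def rcoth (x : ℝ) : ℝ := Real.cosh x / Real.sinh x

/-! For `w x = k tanh (k x)` one has the Riccati equation `w' + w² = k²`, and `w (±R) = ∓α`
exactly when `k tanh (R k) = -α`. Integrating `(w u²)'` by parts, the Robin numerator of any `u`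
equals `∫ (u' - w u)² - k² ∫ u²`, so every Rayleigh quotient is at least `-k²`, with equality for
`u x = cosh (k x)`, which solves `u' = w u`. The map `k ↦ k tanh (R k)` is continuous, strictly
increasing and unbounded, which gives the unique positive root; it is also strictly increasing in
`R`, so the root decreases as `R` grows and `-k²` increases. -/

open Real Set Filter

namespace Real

theorem tanh_strictMono : StrictMono tanh := by
  intro a b hab
  simp only [tanh_eq_sinh_div_cosh]
  rw [div_lt_div_iff₀ (cosh_pos a) (cosh_pos b)]
  have h := sinh_pos_iff.mpr (sub_pos.mpr hab)
  rw [sinh_sub] at h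
  linarith

theorem tanh_pos {x : ℝ} (hx : 0 < x) : 0 < tanh x := by
  simpa using tanh_strictMono hx

theorem continuous_tanh : Continuous tanh := by
  simp only [funext tanh_eq_sinh_div_cosh]
  exact continuous_sinh.div continuous_cosh fun x => (cosh_pos x).ne'

theorem hasDerivAt_tanh (x : ℝ) : HasDerivAt tanh (1 - tanh x ^ 2) x := by
  simp only [funext tanh_eq_sinh_div_cosh]
  refine ((hasDerivAt_sinh x).div (hasDerivAt_cosh x) (cosh_pos x).ne').congr_deriv ?_
  field_simp

end Real

theorem hasDerivAt_mul_tanh_mul (k x : ℝ) :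
    HasDerivAt (fun y => k * tanh (k * y)) (k ^ 2 - (k * tanh (k * x)) ^ 2) x := by
  have h : HasDerivAt (fun y => tanh (k * y)) ((1 - tanh (k * x) ^ 2) * (k * 1)) x :=
    (hasDerivAt_tanh (k * x)).comp x ((hasDerivAt_id x).const_mul k)
  exact (h.const_mul k).congr_deriv (by ring)

theorem deriv_cosh_mul (k x : ℝ) :
    deriv (fun y => cosh (k * y)) x = k * tanh (k * x) * cosh (k * x) := by
  have h : HasDerivAt (fun y => cosh (k * y)) (sinh (k * x) * (k * 1)) x :=
    (hasDerivAt_cosh (k * x)).comp x ((hasDerivAt_id x).const_mul k)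
  rw [h.deriv, tanh_eq_sinh_div_cosh]
  field_simp

theorem strictMonoOn_mul_tanh_mul {R : ℝ} (hR : 0 < R) :
    StrictMonoOn (fun k => k * tanh (R * k)) (Ici 0) := by
  intro a ha b _ hab
  have hb : 0 < b := lt_of_le_of_lt ha hab
  calc a * tanh (R * a) ≤ a * tanh (R * b) :=
        mul_le_mul_of_nonneg_left (tanh_strictMono.monotone (by gcongr)) ha
    _ < b * tanh (R * b) := mul_lt_mul_of_pos_right hab (tanh_pos (by positivity))

theorem tendsto_mul_tanh_mul_atTop {R : ℝ} (hR : 0 < R) :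
    Tendsto (fun k => k * tanh (R * k)) atTop atTop := by
  refine tendsto_atTop_mono' atTop ?_ (tendsto_id.atTop_mul_const (tanh_pos hR))
  filter_upwards [eventually_ge_atTop 1] with k hk
  exact mul_le_mul_of_nonneg_left (tanh_strictMono.monotone (by nlinarith)) (by simp; linarith)

theorem exists_pos_mul_tanh_mul_eq {R c : ℝ} (hR : 0 < R) (hc : 0 < c) :
    ∃ k, 0 < k ∧ k * tanh (R * k) = c := by
  have hcont : ContinuousOn (fun k => k * tanh (R * k)) (Ici 0) :=
    (continuous_id.mul (continuous_tanh.comp (continuous_const.mul continuous_id))).continuousOn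
  obtain ⟨k, hk, hkc⟩ := intermediate_value_Ici hcont (tendsto_mul_tanh_mul_atTop hR)
    (show c ∈ Ici (0 * tanh (R * 0)) by simpa using hc.le)
  refine ⟨k, lt_of_le_of_ne hk ?_, hkc⟩
  rintro rfl
  simp [hc.ne] at hkc

theorem lt_of_mul_tanh_mul_eq {R₁ R₂ k₁ k₂ c : ℝ} (hR₁ : 0 < R₁) (hR : R₁ < R₂) (hk₁ : 0 < k₁)
    (hk₂ : 0 ≤ k₂) (h₁ : k₁ * tanh (R₁ * k₁) = c) (h₂ : k₂ * tanh (R₂ * k₂) = c) : k₂ < k₁ := by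
  by_contra! hle
  have : c < c := calc
    c = k₁ * tanh (R₁ * k₁) := h₁.symm
    _ < k₁ * tanh (R₂ * k₁) := mul_lt_mul_of_pos_left (tanh_strictMono (by gcongr)) hk₁
    _ ≤ k₂ * tanh (R₂ * k₂) :=
      (strictMonoOn_mul_tanh_mul (hR₁.trans hR)).monotoneOn hk₁.le hk₂ hle
    _ = c := h₂
  exact this.false

theorem rcoth_eq_inv_tanh (x : ℝ) : rcoth x = (tanh x)⁻¹ := by
  rw [rcoth, tanh_eq_sinh_div_cosh, inv_div]

theorem neg_div_eq_rcoth_iff {α k x : ℝ} (hα : α ≠ 0) (hx : x ≠ 0) :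
    -k / α = rcoth x ↔ k * tanh x = -α := by
  have ht : tanh x ≠ 0 := fun h => hx (tanh_injective (h.trans tanh_zero.symm))
  rw [rcoth_eq_inv_tanh, div_eq_iff hα, eq_comm, ← div_eq_inv_mul, div_eq_iff ht]
  constructor <;> intro h <;> linarith

theorem integral_deriv_sq_eq_of_riccati {u w : ℝ → ℝ} {c : ℝ} (a b : ℝ) (hu : ContDiff ℝ 1 u)
    (hw : ∀ x, HasDerivAt w (c - w x ^ 2) x) :
    ∫ x in a..b, deriv u x ^ 2 = (∫ x in a..b, (deriv u x - w x * u x) ^ 2)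
      + (w b * u b ^ 2 - w a * u a ^ 2) - c * ∫ x in a..b, u x ^ 2 := by
  have hu' : Continuous (deriv u) := hu.continuous_deriv le_rfl
  have hwc : Continuous w := continuous_iff_continuousAt.2 fun x => (hw x).continuousAt
  have hF : ∀ x, HasDerivAt (fun y => w y * u y ^ 2)
      ((c - w x ^ 2) * u x ^ 2 + w x * (2 * u x * deriv u x)) x := fun x =>
    ((hw x).mul (((hu.differentiable one_ne_zero x).hasDerivAt).pow 2)).congr_deriv
      (by simp only [Pi.pow_apply]; ring)
  have hFi : ∫ x in a..b, ((c - w x ^ 2) * u x ^ 2 + w x * (2 * u x * deriv u x)) =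
      w b * u b ^ 2 - w a * u a ^ 2 :=
    integral_eq_sub_of_hasDerivAt (fun x _ => hF x)
      ((by fun_prop : Continuous _).intervalIntegrable a b)
  -- `(u' - w u)² = u'² + c u² - (w u²)'` by the Riccati equation
  have hsq : ∫ x in a..b, (deriv u x - w x * u x) ^ 2 = (∫ x in a..b, deriv u x ^ 2)
      + c * (∫ x in a..b, u x ^ 2)
      - ∫ x in a..b, ((c - w x ^ 2) * u x ^ 2 + w x * (2 * u x * deriv u x)) := by
    rw [← intervalIntegral.integral_const_mul,
      ← integral_add (Continuous.intervalIntegrable (by fun_prop) a b)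
        (Continuous.intervalIntegrable (by fun_prop) a b),
      ← integral_sub (Continuous.intervalIntegrable (by fun_prop) a b)
        (Continuous.intervalIntegrable (by fun_prop) a b)]
    congr 1
    ext x
    ring
  rw [hsq, hFi]
  ring

theorem lam1Int_eq_of_riccati {α a b c : ℝ} {w φ : ℝ → ℝ} (hab : a < b)
    (hw : ∀ x, HasDerivAt w (c - w x ^ 2) x) (hwa : w a = α) (hwb : w b = -α)
    (hφ : ContDiff ℝ 1 φ) (hφ0 : ∀ x, φ x ≠ 0) (hφw : ∀ x, deriv φ x = w x * φ x) :
    lam1Int α a b = -c := by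
  have hnum : ∀ u : ℝ → ℝ, ContDiff ℝ 1 u →
      (∫ x in a..b, deriv u x ^ 2) + α * (u a ^ 2 + u b ^ 2) =
        (∫ x in a..b, (deriv u x - w x * u x) ^ 2) - c * ∫ x in a..b, u x ^ 2 := by
    intro u hu
    rw [integral_deriv_sq_eq_of_riccati a b hu hw, hwa, hwb]
    ring
  have hφpos : 0 < ∫ x in a..b, φ x ^ 2 :=
    intervalIntegral_pos_of_pos_on ((hφ.continuous.pow 2).intervalIntegrable a b)
      (fun x _ => by have := hφ0 x; positivity) hab
  refine IsLeast.csInf_eq ⟨⟨φ, hφ, hφpos.ne', ?_⟩, ?_⟩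
  · rw [eq_div_iff hφpos.ne', hnum φ hφ]
    simp [hφw]
  · rintro q ⟨u, hu, hu0, rfl⟩
    have hpos : 0 < ∫ x in a..b, u x ^ 2 :=
      (integral_nonneg hab.le fun x _ => sq_nonneg (u x)).lt_of_ne' hu0
    rw [le_div_iff₀ hpos, hnum u hu]
    have hsq : 0 ≤ ∫ x in a..b, (deriv u x - w x * u x) ^ 2 :=
      integral_nonneg hab.le fun x _ => sq_nonneg _
    linarith

theorem lam1Int_neg_eq_of_mul_tanh_mul_eq {α R k : ℝ} (hR : 0 < R)
    (hk : k * tanh (R * k) = -α) : lam1Int α (-R) R = -k ^ 2 := by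
  have hkR : k * tanh (k * R) = -α := by rwa [mul_comm k R]
  refine lam1Int_eq_of_riccati (w := fun x => k * tanh (k * x)) (φ := fun x => cosh (k * x))
    (by linarith) (hasDerivAt_mul_tanh_mul k) ?_ hkR
    (contDiff_cosh.comp (contDiff_const.mul contDiff_id)) (fun x => (cosh_pos _).ne')
    (deriv_cosh_mul k)
  simp only [mul_neg, tanh_neg, hkR, neg_neg]

/-- For `α < 0`, `λ₁^α((−R,R)) = −k²` with `k` the smallest positive solution of
`−k/α = coth(Rk)`, and `R ↦ λ₁^α((−R,R))` is strictly increasing. -/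
theorem lam1Int_eq_and_strictMono (α : ℝ) (hα : α < 0) :
    (∀ R : ℝ, 0 < R → ∃ k : ℝ, 0 < k ∧ -k / α = rcoth (R * k) ∧
      (∀ k', 0 < k' → -k' / α = rcoth (R * k') → k ≤ k') ∧
      lam1Int α (-R) R = -k ^ 2) ∧
    StrictMonoOn (fun R : ℝ => lam1Int α (-R) R) (Set.Ioi 0) := by
  have hroot : ∀ R, 0 < R → ∀ k, 0 < k → (-k / α = rcoth (R * k) ↔ k * tanh (R * k) = -α) :=
    fun R hR k hk => neg_div_eq_rcoth_iff hα.ne (by positivity)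
  constructor
  · intro R hR
    obtain ⟨k, hk, hkα⟩ := exists_pos_mul_tanh_mul_eq hR (neg_pos.mpr hα)
    refine ⟨k, hk, (hroot R hR k hk).mpr hkα, fun k' hk' hk'α => ?_,
      lam1Int_neg_eq_of_mul_tanh_mul_eq hR hkα⟩
    rw [← (strictMonoOn_mul_tanh_mul hR).le_iff_le hk.le hk'.le]
    exact (hkα.trans ((hroot R hR k' hk').mp hk'α).symm).le
  · intro R₁ hR₁ R₂ hR₂ hR
    obtain ⟨k₁, hk₁, hk₁α⟩ := exists_pos_mul_tanh_mul_eq hR₁ (neg_pos.mpr hα)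
    obtain ⟨k₂, hk₂, hk₂α⟩ := exists_pos_mul_tanh_mul_eq hR₂ (neg_pos.mpr hα)
    have hk : k₂ < k₁ := lt_of_mul_tanh_mul_eq hR₁ hR hk₁ hk₂.le hk₁α hk₂α
    simp only [lam1Int_neg_eq_of_mul_tanh_mul_eq hR₁ hk₁α,
      lam1Int_neg_eq_of_mul_tanh_mul_eq hR₂ hk₂α, neg_lt_neg_iff]
    gcongr
end

section
/- Let α < 0. As R → 0+, the first Robin eigenvalue of the interval (−R,R) satisfies λ₁^α((−R,R)) = α/R + o(1/R); and as R → +∞, λ₁^α((−R,R)) = −α² + o(1). -/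
/-!
Both bounds come from the ground-state (Riccati) identity
`u'² + K u² - (u² w)' = (u' - w u)² + u² (K - w' - w²)`: integrating it for the linear weight `w`
with `w(∓R) = ±α` gives `α/R - α² ≤ λ₁^α((-R,R))`. Constants give `λ₁^α((-R,R)) ≤ α/R`, and for
`α ≤ 0` the test function `e^{-αx}` gives `λ₁^α((-R,R)) ≤ -α²`, so both asymptotics follow by
squeezing.
-/

open MeasureTheory intervalIntegral Topology Filter Asymptotics

open Real Set

noncomputable def robinForm (α a b : ℝ) (u : ℝ → ℝ) : ℝ :=
  (∫ x in a..b, deriv u x ^ 2) + α * (u a ^ 2 + u b ^ 2)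

theorem sq_mul_sub_le_integral_of_riccati {u w w' : ℝ → ℝ} {a b K : ℝ} (hab : a ≤ b)
    (hu : ContDiff ℝ 1 u) (hw : ∀ x ∈ Icc a b, HasDerivAt w (w' x) x)
    (hK : ∀ x ∈ Ioo a b, w' x + w x ^ 2 ≤ K) :
    u b ^ 2 * w b - u a ^ 2 * w a ≤ ∫ x in a..b, (deriv u x ^ 2 + K * u x ^ 2) := by
  have hu' : ∀ x, HasDerivAt u (deriv u x) x := fun x =>
    ((hu.differentiable one_ne_zero) x).hasDerivAt
  refine sub_le_integral_of_hasDeriv_right_of_le hab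
    ((hu.continuous.continuousOn.pow 2).mul fun x hx => (hw x hx).continuousAt.continuousWithinAt)
    (fun x hx => (((hu' x).pow 2).mul (hw x (Ioo_subset_Icc_self hx))).hasDerivWithinAt)
    (((hu.continuous_deriv le_rfl).pow 2).add (continuous_const.mul (hu.continuous.pow 2))
      |>.integrableOn_Icc) fun x hx => ?_
  simp only [Pi.pow_apply, Nat.cast_ofNat, Nat.add_one_sub_one, pow_one]
  nlinarith [sq_nonneg (deriv u x - w x * u x),
    mul_nonneg (sq_nonneg (u x)) (sub_nonneg.2 (hK x hx))]

theorem mul_integral_sq_le_robinForm (α : ℝ) {a b : ℝ} (hab : a < b) {u : ℝ → ℝ}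
    (hu : ContDiff ℝ 1 u) :
    (2 * α / (b - a) - α ^ 2) * ∫ x in a..b, u x ^ 2 ≤ robinForm α a b u := by
  set c := -2 * α / (b - a)
  have hc : c * (b - a) = -2 * α := div_mul_cancel₀ _ (sub_pos.2 hab).ne'
  have hriccati := sq_mul_sub_le_integral_of_riccati (u := u)
    (w := fun x => c * (x - (a + b) / 2)) (w' := fun _ => c) (K := c + α ^ 2) hab.le hu
    (fun x _ => by simpa using ((hasDerivAt_id x).sub_const ((a + b) / 2)).const_mul c)
    (fun x hx => by
      have hdist : (x - (a + b) / 2) ^ 2 ≤ ((b - a) / 2) ^ 2 := by nlinarith [hx.1, hx.2]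
      have : (c * (x - (a + b) / 2)) ^ 2 ≤ α ^ 2 := calc
        _ = c ^ 2 * (x - (a + b) / 2) ^ 2 := by ring
        _ ≤ c ^ 2 * ((b - a) / 2) ^ 2 := by gcongr
        _ = α ^ 2 := by linear_combination (c * (b - a) / 4 - α / 2) * hc
      linarith)
  have hwb : c * (b - (a + b) / 2) = -α := by linear_combination hc / 2
  have hwa : c * (a - (a + b) / 2) = α := by linear_combination -hc / 2
  have hK : 2 * α / (b - a) - α ^ 2 = -(c + α ^ 2) := by simp only [c]; ring
  rw [hwb, hwa, intervalIntegral.integral_add, intervalIntegral.integral_const_mul] at hriccati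
  · rw [robinForm, hK]
    linarith
  · exact ((hu.continuous_deriv le_rfl).pow 2).intervalIntegrable _ _
  · exact (continuous_const.mul (hu.continuous.pow 2)).intervalIntegrable _ _

theorem integral_sq_pos_of_ne_zero {u : ℝ → ℝ} {a b : ℝ} (hab : a ≤ b)
    (hne : ∫ x in a..b, u x ^ 2 ≠ 0) : 0 < ∫ x in a..b, u x ^ 2 :=
  (integral_nonneg hab fun _ _ => sq_nonneg _).lt_of_ne' hne

theorem lam1Int_le_robinForm_div (α : ℝ) {a b : ℝ} (hab : a < b) {u : ℝ → ℝ}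
    (hu : ContDiff ℝ 1 u) (hne : ∫ x in a..b, u x ^ 2 ≠ 0) :
    lam1Int α a b ≤ robinForm α a b u / ∫ x in a..b, u x ^ 2 := by
  refine csInf_le ⟨2 * α / (b - a) - α ^ 2, ?_⟩ ⟨u, hu, hne, rfl⟩
  rintro _ ⟨v, hv, hvne, rfl⟩
  rw [le_div_iff₀ (integral_sq_pos_of_ne_zero hab.le hvne)]
  exact mul_integral_sq_le_robinForm α hab hv

theorem le_lam1Int {α a b L : ℝ} (hab : a < b)
    (hL : ∀ u : ℝ → ℝ, ContDiff ℝ 1 u → L * ∫ x in a..b, u x ^ 2 ≤ robinForm α a b u) :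
    L ≤ lam1Int α a b := by
  refine le_csInf ⟨_, fun _ => 1, contDiff_const, by simp [(sub_pos.2 hab).ne'], rfl⟩ ?_
  rintro _ ⟨u, hu, hne, rfl⟩
  rw [le_div_iff₀ (integral_sq_pos_of_ne_zero hab.le hne)]
  exact hL u hu

theorem lam1Int_ge (α : ℝ) {a b : ℝ} (hab : a < b) : 2 * α / (b - a) - α ^ 2 ≤ lam1Int α a b :=
  le_lam1Int hab fun _ => mul_integral_sq_le_robinForm α hab

theorem lam1Int_le (α : ℝ) {a b : ℝ} (hab : a < b) : lam1Int α a b ≤ 2 * α / (b - a) := by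
  have hne : ∫ _ in a..b, (1 : ℝ) ^ 2 ≠ 0 := by simp [(sub_pos.2 hab).ne']
  convert lam1Int_le_robinForm_div α hab contDiff_const hne using 1
  simp [robinForm, mul_comm, one_add_one_eq_two]

theorem lam1Int_le_neg_sq {α : ℝ} (hα : α ≤ 0) {a b : ℝ} (hab : a < b) :
    lam1Int α a b ≤ -α ^ 2 := by
  set u : ℝ → ℝ := fun x => exp (-α * x)
  have hu : ∀ x, HasDerivAt u (-α * u x) x := fun x => by
    simpa [u, mul_comm] using ((hasDerivAt_id x).const_mul (-α)).exp
  have huC : Continuous u := by fun_prop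
  have hderiv : deriv u = fun x => -α * u x := funext fun x => (hu x).deriv
  have hftc : -2 * α * ∫ x in a..b, u x ^ 2 = u b ^ 2 - u a ^ 2 := by
    rw [← intervalIntegral.integral_const_mul]
    exact integral_eq_sub_of_hasDerivAt (f := u ^ 2)
      (fun x _ => ((hu x).pow 2).congr_deriv (by ring))
      (Continuous.intervalIntegrable (by fun_prop) _ _)
  have hpos : 0 < ∫ x in a..b, u x ^ 2 :=
    intervalIntegral_pos_of_pos ((huC.pow 2).intervalIntegrable _ _)
      (fun x => by positivity) hab
  have hform : robinForm α a b u = -α ^ 2 * (∫ x in a..b, u x ^ 2) + 2 * α * u a ^ 2 := by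
    rw [robinForm, hderiv]
    simp only [mul_pow, neg_sq, intervalIntegral.integral_const_mul]
    linear_combination -α * hftc
  refine (lam1Int_le_robinForm_div α hab (by fun_prop) hpos.ne').trans ?_
  rw [div_le_iff₀ hpos, hform]
  linarith [mul_nonpos_of_nonpos_of_nonneg hα (sq_nonneg (u a))]

/-- For `α < 0`: `λ₁^α((−R,R)) = α/R + o(1/R)` as `R → 0+`, and
`λ₁^α((−R,R)) = −α² + o(1)` as `R → ∞`. -/
theorem lam1Int_asymptotics (α : ℝ) (hα : α < 0) :
    (fun R : ℝ => lam1Int α (-R) R - α / R) =o[𝓝[>] 0] (fun R : ℝ => 1 / R) ∧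
    Tendsto (fun R : ℝ => lam1Int α (-R) R) atTop (𝓝 (-α ^ 2)) := by
  have hlen : ∀ R : ℝ, 2 * α / (R - -R) = α / R := fun R => by
    rw [sub_neg_eq_add, ← two_mul, mul_div_mul_left _ _ two_ne_zero]
  have hlow : ∀ R : ℝ, 0 < R → α / R - α ^ 2 ≤ lam1Int α (-R) R := fun R hR =>
    hlen R ▸ lam1Int_ge α (neg_lt_self hR)
  constructor
  · have hbdd : (fun R : ℝ => lam1Int α (-R) R - α / R) =O[𝓝[>] 0] (fun _ => (1 : ℝ)) := by
      refine IsBigO.of_bound (α ^ 2) ?_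
      filter_upwards [self_mem_nhdsWithin] with R (hR : 0 < R)
      have hup := hlen R ▸ lam1Int_le α (neg_lt_self hR)
      rw [norm_one, mul_one, Real.norm_eq_abs, abs_le]
      constructor <;> linarith [hlow R hR, sq_nonneg α]
    refine hbdd.trans_isLittleO (isLittleO_const_left.2 (Or.inr ?_))
    simpa only [one_div] using tendsto_norm_atTop_atTop.comp tendsto_inv_nhdsGT_zero
  · refine tendsto_of_tendsto_of_tendsto_of_le_of_le' ?_ tendsto_const_nhds
      ((eventually_gt_atTop 0).mono hlow)
      ((eventually_gt_atTop 0).mono fun R hR => lam1Int_le_neg_sq hα.le (neg_lt_self hR))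
    simpa using (tendsto_const_nhds.div_atTop tendsto_id).sub_const (α ^ 2)
end

section
/- Let α < 0 and 0 < R₁ < R₂, and let μ₁^α(A_{R₁,R₂}) denote the first eigenvalue of the Laplacian on the two-dimensional annulus A_{R₁,R₂} with Robin condition (parameter α) on the outer circle and Neumann condition on the inner circle. Then μ₁^α(A_{R₁,R₂}) ≤ λ₁^α(B_{R₂}), the first Robin eigenvalue of the disk of radius R₂. -/
/-!
Restrict a test function `φ` for the disk to the annulus. Writing `μ` for the annulus
infimum, `μ ≤ 0` gives `μ ∫₀^{R₁} φ² r ≤ 0 ≤ ∫₀^{R₁} φ'² r`, and the definition of `μ`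
gives `μ ∫_{R₁}^{R₂} φ² r ≤ ∫_{R₁}^{R₂} φ'² r + α R₂ φ(R₂)²`; adding the two bounds the
disk quotient of `φ` below by `μ`. Here `μ < 0` because the constant function has quotient
`α R₂ / ((R₂² - R₁²)/2)`. Both steps need the annulus quotients to be bounded below (`sInf`
of a set unbounded below is `0`); this holds because for `R₁ > 0` the trace `φ(R₂)²` is
controlled by `∫ φ'² r` and `∫ φ² r`.
-/

open MeasureTheory intervalIntegral

/-- First eigenvalue of the Laplacian on the two-dimensional annulus `A_{R₁,R₂}` with a
Robin condition (parameter `α`) on the outer circle and a Neumann condition on the inner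
circle, via the radial Rayleigh quotient
`(∫_{R₁}^{R₂} ψ'(r)² r dr + α R₂ ψ(R₂)²) / ∫_{R₁}^{R₂} ψ(r)² r dr`. -/
noncomputable def mu1Annulus (R₁ R₂ α : ℝ) : ℝ :=
  sInf { q : ℝ | ∃ ψ : ℝ → ℝ, ContDiff ℝ 1 ψ ∧
    (∫ r in R₁..R₂, (ψ r) ^ 2 * r) ≠ 0 ∧
    q = ((∫ r in R₁..R₂, (deriv ψ r) ^ 2 * r) + α * R₂ * (ψ R₂) ^ 2) /
        (∫ r in R₁..R₂, (ψ r) ^ 2 * r) }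

/-- First Robin eigenvalue of the disk of radius `R` via the radial Rayleigh quotient. -/
noncomputable def lam1Disk (R α : ℝ) : ℝ :=
  sInf { q : ℝ | ∃ φ : ℝ → ℝ, ContDiff ℝ 1 φ ∧
    (∫ r in (0 : ℝ)..R, (φ r) ^ 2 * r) ≠ 0 ∧
    q = ((∫ r in (0 : ℝ)..R, (deriv φ r) ^ 2 * r) + α * R * (φ R) ^ 2) /
        (∫ r in (0 : ℝ)..R, (φ r) ^ 2 * r) }

noncomputable def radialMass (a b : ℝ) (ψ : ℝ → ℝ) : ℝ :=
  ∫ r in a..b, ψ r ^ 2 * r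

noncomputable def radialRobinEnergy (a b α : ℝ) (ψ : ℝ → ℝ) : ℝ :=
  (∫ r in a..b, deriv ψ r ^ 2 * r) + α * b * ψ b ^ 2

/-- `mu1Annulus R₁ R₂ α` and `lam1Disk R α` are, by definition, the infima of these sets
for `(a, b) = (R₁, R₂)` and `(0, R)`. -/
def radialRayleighQuotients (a b α : ℝ) : Set ℝ :=
  {q | ∃ ψ : ℝ → ℝ, ContDiff ℝ 1 ψ ∧ radialMass a b ψ ≠ 0 ∧
    q = radialRobinEnergy a b α ψ / radialMass a b ψ}

section

variable {a b : ℝ} {ψ : ℝ → ℝ}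

lemma radialMass_nonneg (ha : 0 ≤ a) (hab : a ≤ b) : 0 ≤ radialMass a b ψ :=
  integral_nonneg hab fun _ hr => mul_nonneg (sq_nonneg _) (ha.trans hr.1)

lemma radialMass_add (hψ : Continuous ψ) (a b c : ℝ) :
    radialMass a b ψ + radialMass b c ψ = radialMass a c ψ := by
  apply integral_add_adjacent_intervals <;> apply Continuous.intervalIntegrable <;> fun_prop

lemma radialRobinEnergy_eq_add (hψ : ContDiff ℝ 1 ψ) (a b c α : ℝ) :
    radialRobinEnergy a c α ψ =
      (∫ r in a..b, deriv ψ r ^ 2 * r) + radialRobinEnergy b c α ψ := by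
  have := hψ.continuous_deriv le_rfl
  rw [radialRobinEnergy, radialRobinEnergy, ← add_assoc, integral_add_adjacent_intervals] <;>
    apply Continuous.intervalIntegrable <;> fun_prop

lemma mul_integral_le_integral_mul_id {f : ℝ → ℝ} (hf : Continuous f)
    (hf0 : ∀ r ∈ Set.Icc a b, 0 ≤ f r) (hab : a ≤ b) :
    a * ∫ r in a..b, f r ≤ ∫ r in a..b, f r * r := by
  rw [← intervalIntegral.integral_const_mul]
  refine integral_mono_on hab (by apply Continuous.intervalIntegrable; fun_prop)
    (by apply Continuous.intervalIntegrable; fun_prop) fun r hr => ?_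
  rw [mul_comm]
  exact mul_le_mul_of_nonneg_left hr.1 (hf0 r hr)

lemma integral_mul_id_le {g : ℝ → ℝ} (hg : Continuous g) {C : ℝ} (ha : 0 ≤ a) (hab : a ≤ b)
    (hgC : ∀ r ∈ Set.Icc a b, g r ≤ C) :
    ∫ r in a..b, g r * r ≤ C * ((b ^ 2 - a ^ 2) / 2) := by
  rw [← integral_id, ← intervalIntegral.integral_const_mul]
  exact integral_mono_on hab (by apply Continuous.intervalIntegrable; fun_prop)
    (by apply Continuous.intervalIntegrable; fun_prop) fun r hr =>
    mul_le_mul_of_nonneg_right (hgC r hr) (ha.trans hr.1)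

lemma mul_sq_sub_sq_le_integral (hψ : ContDiff ℝ 1 ψ) (u v : ℝ) {r : ℝ} (hr : r ∈ Set.Icc a b) :
    u * v * (ψ b ^ 2 - ψ r ^ 2) ≤
      u ^ 2 * (∫ x in a..b, deriv ψ x ^ 2) + v ^ 2 * ∫ x in a..b, ψ x ^ 2 := by
  have := hψ.continuous_deriv le_rfl
  have := hψ.continuous
  have hftc : ψ b ^ 2 - ψ r ^ 2 = ∫ x in r..b, 2 * ψ x * deriv ψ x := by
    refine (integral_eq_sub_of_hasDerivAt (f := fun y => ψ y ^ 2) (fun x _ => ?_)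
      (by apply Continuous.intervalIntegrable; fun_prop)).symm
    simpa [mul_comm, mul_assoc, mul_left_comm] using
      ((hψ.differentiable one_ne_zero) x).hasDerivAt.fun_pow 2
  calc u * v * (ψ b ^ 2 - ψ r ^ 2) = ∫ x in r..b, 2 * (u * deriv ψ x) * (v * ψ x) := by
        rw [hftc, ← intervalIntegral.integral_const_mul]; congr 1; ext x; ring
    _ ≤ ∫ x in r..b, ((u * deriv ψ x) ^ 2 + (v * ψ x) ^ 2) :=
        integral_mono_on hr.2 (by apply Continuous.intervalIntegrable; fun_prop)
          (by apply Continuous.intervalIntegrable; fun_prop) fun x _ => two_mul_le_add_sq _ _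
    _ ≤ ∫ x in a..b, ((u * deriv ψ x) ^ 2 + (v * ψ x) ^ 2) := by
        rw [← integral_add_adjacent_intervals (a := a) (b := r) (c := b)] <;>
          try (apply Continuous.intervalIntegrable; fun_prop)
        exact le_add_of_nonneg_left (integral_nonneg hr.1 fun _ _ => by positivity)
    _ = u ^ 2 * (∫ x in a..b, deriv ψ x ^ 2) + v ^ 2 * ∫ x in a..b, ψ x ^ 2 := by
        simp only [mul_pow]
        rw [intervalIntegral.integral_add, intervalIntegral.integral_const_mul,
          intervalIntegral.integral_const_mul] <;> apply Continuous.intervalIntegrable <;> fun_prop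

lemma trace_inequality (hψ : ContDiff ℝ 1 ψ) (ha : 0 < a) (hab : a < b) (κ : ℝ) :
    κ * ψ b ^ 2 ≤ (∫ r in a..b, deriv ψ r ^ 2 * r) +
      (κ / ((b ^ 2 - a ^ 2) / 2) + κ ^ 2 / a ^ 2) * radialMass a b ψ := by
  have := hψ.continuous_deriv le_rfl
  have := hψ.continuous
  have hK : 0 < (b ^ 2 - a ^ 2) / 2 := by nlinarith
  have hN : a * (∫ r in a..b, deriv ψ r ^ 2) ≤ ∫ r in a..b, deriv ψ r ^ 2 * r :=
    mul_integral_le_integral_mul_id (by fun_prop) (fun _ _ => sq_nonneg _) hab.le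
  have hD : a * (∫ r in a..b, ψ r ^ 2) ≤ radialMass a b ψ :=
    mul_integral_le_integral_mul_id (by fun_prop) (fun _ _ => sq_nonneg _) hab.le
  -- AM-GM `2 a κ ψ ψ' ≤ a² ψ'² + κ² ψ²` on `[r, b]`, then average over `r` with weight `r`.
  have hmean : -(a * κ) * radialMass a b ψ ≤ (a ^ 2 * (∫ r in a..b, deriv ψ r ^ 2) +
      κ ^ 2 * (∫ r in a..b, ψ r ^ 2) - a * κ * ψ b ^ 2) * ((b ^ 2 - a ^ 2) / 2) := by
    have := integral_mul_id_le (g := fun r => -(a * κ) * ψ r ^ 2) (by fun_prop) ha.le hab.le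
      (C := a ^ 2 * (∫ r in a..b, deriv ψ r ^ 2) + κ ^ 2 * (∫ r in a..b, ψ r ^ 2) -
        a * κ * ψ b ^ 2) fun r hr => by linarith [mul_sq_sub_sq_le_integral hψ a κ hr]
    simp only [mul_assoc (-(a * κ)), intervalIntegral.integral_const_mul] at this
    exact this
  set K := (b ^ 2 - a ^ 2) / 2
  set N := ∫ r in a..b, deriv ψ r ^ 2 * r
  set D := radialMass a b ψ
  have hexpand : a ^ 2 * K * (N + (κ / K + κ ^ 2 / a ^ 2) * D) =
      a ^ 2 * K * N + a ^ 2 * κ * D + K * κ ^ 2 * D := by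
    field_simp
    ring
  refine le_of_mul_le_mul_left ?_ (by positivity : 0 < a ^ 2 * K)
  rw [hexpand]
  nlinarith [mul_le_mul_of_nonneg_left hN (by positivity : 0 ≤ a * K),
    mul_le_mul_of_nonneg_left hD (by positivity : 0 ≤ κ ^ 2 * K)]

lemma exists_mul_radialMass_le_radialRobinEnergy (ha : 0 < a) (hab : a < b) (α : ℝ) :
    ∃ m, ∀ ψ : ℝ → ℝ, ContDiff ℝ 1 ψ → m * radialMass a b ψ ≤ radialRobinEnergy a b α ψ := by
  refine ⟨-(-(α * b) / ((b ^ 2 - a ^ 2) / 2) + (-(α * b)) ^ 2 / a ^ 2), fun ψ hψ => ?_⟩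
  have := trace_inequality hψ ha hab (-(α * b))
  rw [radialRobinEnergy]
  linarith

lemma bddBelow_radialRayleighQuotients (ha : 0 < a) (hab : a < b) (α : ℝ) :
    BddBelow (radialRayleighQuotients a b α) := by
  obtain ⟨m, hm⟩ := exists_mul_radialMass_le_radialRobinEnergy ha hab α
  refine ⟨m, ?_⟩
  rintro _ ⟨ψ, hψ, hD, rfl⟩
  rw [le_div_iff₀ ((radialMass_nonneg ha.le hab.le).lt_of_ne' hD)]
  exact hm ψ hψ

lemma sInf_radialRayleighQuotients_mul_le (ha : 0 < a) (hab : a < b) {α : ℝ}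
    (hψ : ContDiff ℝ 1 ψ) :
    sInf (radialRayleighQuotients a b α) * radialMass a b ψ ≤ radialRobinEnergy a b α ψ := by
  by_cases hD : radialMass a b ψ = 0
  · obtain ⟨m, hm⟩ := exists_mul_radialMass_le_radialRobinEnergy ha hab α
    simpa [hD] using hm ψ hψ
  · rw [← le_div_iff₀ ((radialMass_nonneg ha.le hab.le).lt_of_ne' hD)]
    exact csInf_le (bddBelow_radialRayleighQuotients ha hab α) ⟨ψ, hψ, hD, rfl⟩

lemma const_mem_radialRayleighQuotients (ha : 0 ≤ a) (hab : a < b) (α : ℝ) :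
    α * b / ((b ^ 2 - a ^ 2) / 2) ∈ radialRayleighQuotients a b α := by
  have hmass : radialMass a b 1 = (b ^ 2 - a ^ 2) / 2 := by
    simp [radialMass, integral_id]
  refine ⟨1, contDiff_const, by rw [hmass]; nlinarith, ?_⟩
  rw [hmass, radialRobinEnergy]
  simp

lemma sInf_radialRayleighQuotients_neg {α : ℝ} (hα : α < 0) (ha : 0 < a) (hab : a < b) :
    sInf (radialRayleighQuotients a b α) < 0 := by
  refine (csInf_le (bddBelow_radialRayleighQuotients ha hab α)
    (const_mem_radialRayleighQuotients ha.le hab α)).trans_lt ?_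
  have : 0 < (b ^ 2 - a ^ 2) / 2 := by nlinarith
  exact div_neg_of_neg_of_pos (mul_neg_of_neg_of_pos hα (ha.trans hab)) this

theorem sInf_radialRayleighQuotients_le_of_le {a' α : ℝ} (ha' : 0 ≤ a') (ha'a : a' ≤ a)
    (ha : 0 < a) (hab : a < b) (hnonpos : sInf (radialRayleighQuotients a b α) ≤ 0) :
    sInf (radialRayleighQuotients a b α) ≤ sInf (radialRayleighQuotients a' b α) := by
  refine le_csInf ⟨_, const_mem_radialRayleighQuotients ha' (ha'a.trans_lt hab) α⟩ ?_
  rintro _ ⟨φ, hφ, hD, rfl⟩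
  rw [le_div_iff₀ ((radialMass_nonneg ha' (ha'a.trans hab.le)).lt_of_ne' hD),
    ← radialMass_add hφ.continuous a' a b, radialRobinEnergy_eq_add hφ a' a b α, mul_add]
  have hinner : sInf (radialRayleighQuotients a b α) * radialMass a' a φ ≤
      ∫ r in a'..a, deriv φ r ^ 2 * r :=
    (mul_nonpos_of_nonpos_of_nonneg hnonpos (radialMass_nonneg ha' ha'a)).trans
      (integral_nonneg ha'a fun _ hr => mul_nonneg (sq_nonneg _) (ha'.trans hr.1))
  exact add_le_add hinner (sInf_radialRayleighQuotients_mul_le ha hab hφ)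

end

theorem mu1_annulus_le_lam1_disk (α R₁ R₂ : ℝ) (hα : α < 0) (h₁ : 0 < R₁) (h₁₂ : R₁ < R₂) :
    mu1Annulus R₁ R₂ α ≤ lam1Disk R₂ α :=
  sInf_radialRayleighQuotients_le_of_le le_rfl h₁.le h₁ h₁₂
    (sInf_radialRayleighQuotients_neg hα h₁ h₁₂).le
end
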